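/- arXiv:2209.09051 — 3 statements merged into one kernel-verified Lean document; each statement's English description precedes it below -/
import Mathlib

section
/- Proposition 7: For an extended cyclic code C, the cyclic derivative descendant of C equals the sum of all its minimal derivative descendants: D(C) = Σ_{β ∈ F^*} D_β(C), where the sum is the subspace sum over all nonzero β ∈ F. -/
/-- Hamming weight of the `m`-bit binary expansion of `s`. -/
def wtm (m s : ℕ) : ℕ := ((Finset.range m).filter fun j => s.testBit j).card

/-- `Pset s`: the set of nonnegative integers whose binary expansion is
properly covered by that of `s`. -/
def Pset (s : ℕ) : Finset ℕ :=
  (Finset.range (s + 1)).filter fun k => k ||| s = s ∧ k ≠ s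

/-- The cyclotomic coset `C_s` modulo `n = 2^m - 1`. -/
def cycCoset (n m s : ℕ) : Finset ℕ := (Finset.range m).image fun j => 2 ^ j * s % n

/-- `cc S`: union of all cyclotomic cosets meeting `S`. -/
def ccSet (n m : ℕ) (S : Finset ℕ) : Finset ℕ := S.biUnion (cycCoset n m)

/-- `cr S`: the set of coset representatives (minimal elements of the cosets) of `S`. -/
def crSet (n m : ℕ) (S : Finset ℕ) : Finset ℕ :=
  (ccSet n m S).filter fun s => ∀ t ∈ cycCoset n m s, s ≤ t

/-- `S` is an exponent set: a set of residues mod `n` closed under doubling mod `n`. -/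
def IsExpSet (n : ℕ) (S : Finset ℕ) : Prop :=
  (∀ j ∈ S, j < n) ∧ ∀ j ∈ S, 2 * j % n ∈ S

/-- The extended cyclic code of length `2^m` with exponent set `S`. -/
def extCyclicCode {F : Type*} [Field F] (n : ℕ) (S : Finset ℕ) : Set (F → F) :=
  { c | ∃ A : ℕ → F, (∀ j ∈ S, A (2 * j % n) = A j ^ 2) ∧
      ∀ x : F, c x = ∑ j ∈ S, A j * x ^ j }

/-- The set of derivatives of the codewords of `C` in direction `β`. -/
def derivSet {F : Type*} [Field F] (β : F) (C : Set (F → F)) : Set (F → F) :=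
  { d | ∃ c ∈ C, d = fun x => c (x + β) - c x }

/-- Minimum Hamming distance (= minimum weight) of a code. -/
noncomputable def minDist {F : Type*} [Field F] [Fintype F] [DecidableEq F]
    (C : Set (F → F)) : ℕ :=
  sInf { w | ∃ c ∈ C, c ≠ (0 : F → F) ∧ hammingNorm c = w }

open scoped Classical


/-- Fourier coefficient extraction for functions `F → F`. -/
noncomputable def acoef (n : ℕ) {F : Type*} [Field F] [Fintype F] (d : F → F) (k : ℕ) : F :=
  ∑ x : Fˣ, d x * (x : F) ^ (n - k)

section Aux

variable {m n : ℕ} {F : Type*} [Field F] [Fintype F]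

lemma aux_char2 (hm : 0 < m) (hF : Fintype.card F = 2 ^ m) : CharP F 2 := by
  obtain ⟨p, hp⟩ := CharP.exists F
  haveI := hp
  obtain ⟨k, hpp, hcard⟩ := FiniteField.card F p
  have hdvd : p ∣ 2 ^ m := by
    rw [hF] at hcard
    exact hcard ▸ dvd_pow_self p k.ne_zero
  have : p = 2 := (Nat.prime_dvd_prime_iff_eq hpp Nat.prime_two).mp (hpp.dvd_of_dvd_pow hdvd)
  rwa [this] at hp

lemma aux_npos (hm : 0 < m) (hn : n = 2 ^ m - 1) : 0 < n := by
  have : 2 ^ 1 ≤ 2 ^ m := Nat.pow_le_pow_right (by norm_num) hm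
  omega

lemma aux_nodd (hm : 0 < m) (hn : n = 2 ^ m - 1) : ¬ 2 ∣ n := by
  have h1 : 2 ^ 1 ∣ 2 ^ m := pow_dvd_pow 2 hm
  have h2 : (1:ℕ) ≤ 2 ^ m := Nat.one_le_two_pow
  intro h
  omega

lemma aux_pow_n (hn : n = 2 ^ m - 1) (hF : Fintype.card F = 2 ^ m)
    (x : F) (hx : x ≠ 0) : x ^ n = 1 := by
  have := FiniteField.pow_card_sub_one_eq_one x hx
  rwa [hF, ← hn] at this

lemma aux_pow_mod (hn : n = 2 ^ m - 1) (hF : Fintype.card F = 2 ^ m)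
    (x : F) (hx : x ≠ 0) (a : ℕ) : x ^ a = x ^ (a % n) := by
  conv_lhs => rw [← Nat.div_add_mod a n]
  rw [pow_add, pow_mul, aux_pow_n hn hF x hx, one_pow, one_mul]

lemma aux_pow_eq (hn : n = 2 ^ m - 1) (hF : Fintype.card F = 2 ^ m)
    (x : F) (hx : x ≠ 0) {a b : ℕ} (h : a % n = b % n) : x ^ a = x ^ b := by
  rw [aux_pow_mod hn hF x hx a, aux_pow_mod hn hF x hx b, h]

lemma aux_sum_pow (hm : 0 < m) (hn : n = 2 ^ m - 1) (hF : Fintype.card F = 2 ^ m)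
    (k : ℕ) : (∑ x : Fˣ, (x : F) ^ k) = if n ∣ k then (1 : F) else 0 := by
  haveI := aux_char2 hm hF
  have h := FiniteField.sum_pow_units F k
  have hcond : Fintype.card F - 1 = n := by rw [hF, hn]
  rw [hcond] at h

  rw [h]
  split_ifs with h
  · exact CharTwo.neg_eq 1
  · rfl

lemma aux_dvd_iff (hnpos : 0 < n) {j k : ℕ} (hj : j < n) (hk : k < n) :
    (n ∣ j + (n - k)) ↔ j = k := by
  constructor
  · intro h
    have h1 : n ≤ j + (n - k) := Nat.le_of_dvd (by omega) h
    have h2 : j + (n - k) < 2 * n := by omega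
    have := Nat.eq_of_dvd_of_lt_two_mul (by omega) h h2
    omega
  · rintro rfl
    exact ⟨1, by omega⟩

lemma aux_rep (hm : 0 < m) (hn : n = 2 ^ m - 1) (hF : Fintype.card F = 2 ^ m)
    (d : F → F) (A : ℕ → F) (hd : ∀ x, d x = ∑ j ∈ Finset.range n, A j * x ^ j)
    {k : ℕ} (hk : k < n) : acoef n d k = A k := by
  have hnpos := aux_npos hm hn
  unfold acoef
  calc ∑ x : Fˣ, d (x : F) * (x : F) ^ (n - k)
      = ∑ x : Fˣ, ∑ j ∈ Finset.range n, A j * (x : F) ^ (j + (n - k)) := by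
        refine Finset.sum_congr rfl fun x _ => ?_
        rw [hd, Finset.sum_mul]
        exact Finset.sum_congr rfl fun j _ => by rw [pow_add, mul_assoc]
    _ = ∑ j ∈ Finset.range n, A j * ∑ x : Fˣ, (x : F) ^ (j + (n - k)) := by
        rw [Finset.sum_comm]
        exact Finset.sum_congr rfl fun j _ => by rw [Finset.mul_sum]
    _ = ∑ j ∈ Finset.range n, (if j = k then A j else 0) := by
        refine Finset.sum_congr rfl fun j hj => ?_
        rw [aux_sum_pow hm hn hF]
        by_cases hcase : j = k
        · rw [if_pos hcase, if_pos ((aux_dvd_iff hnpos (Finset.mem_range.1 hj) hk).mpr hcase),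
            mul_one]
        · rw [if_neg hcase,
            if_neg (fun hd => hcase ((aux_dvd_iff hnpos (Finset.mem_range.1 hj) hk).mp hd)),
            mul_zero]
    _ = A k := by rw [Finset.sum_ite_eq' (Finset.range n) k A, if_pos (Finset.mem_range.2 hk)]

lemma aux_inv (hm : 0 < m) (hn : n = 2 ^ m - 1) (hF : Fintype.card F = 2 ^ m)
    (d : F → F) (hd : ∃ A : ℕ → F, ∀ x, d x = ∑ j ∈ Finset.range n, A j * x ^ j) :
    ∀ x, d x = ∑ k ∈ Finset.range n, acoef n d k * x ^ k := by
  obtain ⟨A, hA⟩ := hd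
  intro x
  rw [hA x]
  exact Finset.sum_congr rfl fun k hk => by
    rw [aux_rep hm hn hF d A hA (Finset.mem_range.1 hk)]

end Aux

section Aux2

variable {m n : ℕ} {F : Type*} [Field F] [Fintype F]

lemma aux_mod_eq (hnpos : 0 < n) {k : ℕ} (hk : k < n) :
    ((n - k) * 2) % n = (n - 2 * k % n) % n := by
  have hdm := Nat.div_add_mod (2 * k) n
  have hr : 2 * k % n < n := Nat.mod_lt _ hnpos
  have hq : 2 * k / n < 2 := by
    by_contra hcon
    push_neg at hcon
    have : n * 2 ≤ n * (2 * k / n) := Nat.mul_le_mul_left n hcon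
    omega
  interval_cases hq2 : (2 * k / n)
  · have h1 : (n - k) * 2 = n + (n - 2 * k % n) := by omega
    rw [h1, Nat.add_mod_left]
  · have h1 : (n - k) * 2 = n - 2 * k % n := by omega
    rw [h1]

lemma aux_double_mod (i j : ℕ) : 2 ^ (i + 1) * j % n = 2 * (2 ^ i * j % n) % n := by
  have h1 : 2 ^ (i + 1) * j = 2 * (2 ^ i * j) := by ring
  rw [h1]
  exact ((Nat.mod_modEq (2 ^ i * j) n).mul_left 2).symm

lemma aux_dinj (hm : 0 < m) (hn : n = 2 ^ m - 1) {j j' : ℕ} (hj : j < n) (hj' : j' < n)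
    (h : 2 * j % n = 2 * j' % n) : j = j' := by
  have hcop : Nat.gcd n 2 = 1 := by
    rw [Nat.gcd_comm]
    exact (Nat.Prime.coprime_iff_not_dvd Nat.prime_two).mpr (aux_nodd hm hn)
  have h' : 2 * j ≡ 2 * j' [MOD n] := h
  have := Nat.ModEq.cancel_left_of_coprime hcop h'
  rwa [Nat.ModEq, Nat.mod_eq_of_lt hj, Nat.mod_eq_of_lt hj'] at this

lemma aux_image (hm : 0 < m) (hn : n = 2 ^ m - 1) (S₀ : Finset ℕ)
    (hlt : ∀ k ∈ S₀, k < n) (hcl : ∀ k ∈ S₀, 2 * k % n ∈ S₀) :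
    S₀.image (fun k => 2 * k % n) = S₀ := by
  apply Finset.eq_of_subset_of_card_le
  · intro k hk
    obtain ⟨k₀, hk₀, rfl⟩ := Finset.mem_image.1 hk
    exact hcl k₀ hk₀
  · rw [Finset.card_image_of_injOn fun a ha b hb hab =>
      aux_dinj hm hn (hlt a ha) (hlt b hb) hab]

/-- iterate the conjugacy relation along a doubling-closed set. -/
lemma aux_iter (S₀ : Finset ℕ) (hlt : ∀ k ∈ S₀, k < n)
    (hcl : ∀ k ∈ S₀, 2 * k % n ∈ S₀) (B : ℕ → F)
    (hconj : ∀ k ∈ S₀, B (2 * k % n) = B k ^ 2) {j : ℕ} (hj : j ∈ S₀) :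
    ∀ i : ℕ, 2 ^ i * j % n ∈ S₀ ∧ B (2 ^ i * j % n) = B j ^ 2 ^ i := by
  intro i
  induction i with
  | zero =>
    rw [pow_zero, one_mul, Nat.mod_eq_of_lt (hlt j hj)]
    exact ⟨hj, (pow_one _).symm⟩
  | succ i ih =>
    obtain ⟨h1, h2⟩ := ih
    rw [aux_double_mod]
    refine ⟨hcl _ h1, ?_⟩
    rw [hconj _ h1, h2, ← pow_mul, pow_succ]

lemma aux_acoef_conj (hm : 0 < m) (hn : n = 2 ^ m - 1) (hF : Fintype.card F = 2 ^ m)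
    (d : F → F) (hd2 : ∀ x, d x ^ 2 = d x) {k : ℕ} (hk : k < n) :
    acoef n d (2 * k % n) = acoef n d k ^ 2 := by
  haveI := aux_char2 hm hF
  haveI : Fact (Nat.Prime 2) := ⟨Nat.prime_two⟩
  have hnpos := aux_npos hm hn
  unfold acoef
  rw [sum_pow_char]
  refine (Finset.sum_congr rfl fun x _ => ?_).symm
  rw [mul_pow, hd2, ← pow_mul]
  congr 1
  exact aux_pow_eq hn hF _ (Units.ne_zero x) (aux_mod_eq hnpos hk)

lemma aux_code_sq (hm : 0 < m) (hn : n = 2 ^ m - 1) (hF : Fintype.card F = 2 ^ m)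
    (S : Finset ℕ) (hS : IsExpSet n S) (c : F → F) (hc : c ∈ extCyclicCode n S) :
    ∀ x : F, c x ^ 2 = c x := by
  haveI := aux_char2 hm hF
  haveI : Fact (Nat.Prime 2) := ⟨Nat.prime_two⟩
  have hnpos := aux_npos hm hn
  obtain ⟨A, hconj, hrep⟩ := hc
  intro x
  rw [hrep x, sum_pow_char]
  calc ∑ j ∈ S, (A j * x ^ j) ^ 2
      = ∑ j ∈ S, A (2 * j % n) * x ^ (2 * j % n) := by
        refine Finset.sum_congr rfl fun j hj => ?_
        rw [mul_pow, ← hconj j hj, ← pow_mul]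
        congr 1
        rcases eq_or_ne x 0 with rfl | hx
        · rcases Nat.eq_zero_or_pos j with rfl | hjpos
          · norm_num
          · have h1 : j * 2 ≠ 0 := by omega
            have h2 : 2 * j % n ≠ 0 := by
              intro h0
              have : n ∣ 2 * j := Nat.dvd_of_mod_eq_zero h0
              have hcop : Nat.gcd 2 n = 1 :=
                (Nat.Prime.coprime_iff_not_dvd Nat.prime_two).mpr (aux_nodd hm hn)
              have : n ∣ j := (Nat.Coprime.dvd_of_dvd_mul_left
                (Nat.coprime_comm.mp hcop) this)
              have := Nat.le_of_dvd hjpos this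
              have := hS.1 j hj
              omega
            rw [zero_pow h1, zero_pow h2]
        · refine aux_pow_eq hn hF x hx ?_
          rw [Nat.mod_mod_of_dvd _ dvd_rfl, mul_comm]
    _ = ∑ k ∈ S.image (fun j => 2 * j % n), A k * x ^ k := by
        rw [Finset.sum_image]
        intro a ha b hb hab
        exact aux_dinj hm hn (hS.1 a ha) (hS.1 b hb) hab
    _ = ∑ j ∈ S, A j * x ^ j := by rw [aux_image hm hn S hS.1 hS.2]

lemma aux_code_mul (hm : 0 < m) (hn : n = 2 ^ m - 1) (hF : Fintype.card F = 2 ^ m)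
    (S : Finset ℕ) (hS : IsExpSet n S) (c : F → F) (hc : c ∈ extCyclicCode n S)
    (u : F) (hu : u ≠ 0) : (fun x => c (u * x)) ∈ extCyclicCode n S := by
  obtain ⟨A, hconj, hrep⟩ := hc
  refine ⟨fun j => A j * u ^ j, fun j hj => ?_, fun x => ?_⟩
  · show A (2 * j % n) * u ^ (2 * j % n) = (A j * u ^ j) ^ 2
    rw [hconj j hj, mul_pow, ← pow_mul]
    congr 1
    refine aux_pow_eq hn hF u hu ?_
    rw [Nat.mod_mod_of_dvd _ dvd_rfl, mul_comm]
  · show c (u * x) = ∑ j ∈ S, (A j * u ^ j) * x ^ j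
    rw [hrep (u * x)]
    exact Finset.sum_congr rfl fun j _ => by rw [mul_pow]; ring

lemma aux_deriv_rep (S : Finset ℕ) (hSlt : ∀ j ∈ S, j < n)
    (A : ℕ → F) (c : F → F) (hc : ∀ x, c x = ∑ j ∈ S, A j * x ^ j) (β : F) :
    ∃ A' : ℕ → F, ∀ x : F, c (x + β) - c x = ∑ k ∈ Finset.range n, A' k * x ^ k := by
  refine ⟨fun k => (∑ j ∈ S, A j * β ^ (j - k) * (j.choose k : F)) -
    (if k ∈ S then A k else 0), fun x => ?_⟩
  have h1 : c (x + β) = ∑ k ∈ Finset.range n,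
      (∑ j ∈ S, A j * β ^ (j - k) * (j.choose k : F)) * x ^ k := by
    rw [hc]
    calc ∑ j ∈ S, A j * (x + β) ^ j
        = ∑ j ∈ S, ∑ k ∈ Finset.range n, A j * (x ^ k * β ^ (j - k) * (j.choose k : F)) := by
          refine Finset.sum_congr rfl fun j hj => ?_
          rw [add_pow, Finset.mul_sum]
          refine Finset.sum_subset (Finset.range_subset_range.2 (hSlt j hj)) fun k hk hk2 => ?_
          have hz : j.choose k = 0 := Nat.choose_eq_zero_of_lt
            (by simp only [Finset.mem_range] at hk2 ⊢; omega)
          simp [hz]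
      _ = ∑ k ∈ Finset.range n, (∑ j ∈ S, A j * β ^ (j - k) * (j.choose k : F)) * x ^ k := by
          rw [Finset.sum_comm]
          refine Finset.sum_congr rfl fun k _ => ?_
          rw [Finset.sum_mul]
          exact Finset.sum_congr rfl fun j _ => by ring
  have h0 : c x = ∑ k ∈ Finset.range n, (if k ∈ S then A k else 0) * x ^ k := by
    rw [hc]
    symm
    calc ∑ k ∈ Finset.range n, (if k ∈ S then A k else 0) * x ^ k
        = ∑ k ∈ Finset.range n, (if k ∈ S then A k * x ^ k else 0) := by
          simp only [ite_mul, zero_mul]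
      _ = ∑ k ∈ Finset.range n ∩ S, A k * x ^ k := Finset.sum_ite_mem _ _ _
      _ = ∑ k ∈ S, A k * x ^ k := by
          rw [Finset.inter_eq_right.2 fun j hj => Finset.mem_range.2 (hSlt j hj)]
  rw [h1, h0, ← Finset.sum_sub_distrib]
  exact Finset.sum_congr rfl fun k _ => by rw [sub_mul]

end Aux2

section Aux3

variable {m n : ℕ} {F : Type*} [Field F] [Fintype F]

lemma aux_O_lt (hm : 0 < m) (hn : n = 2 ^ m - 1) {j k : ℕ} (hk : k ∈ cycCoset n m j) :
    k < n := by
  obtain ⟨i, _, rfl⟩ := Finset.mem_image.1 hk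
  exact Nat.mod_lt _ (aux_npos hm hn)

lemma aux_O_self (hm : 0 < m) {j : ℕ} (hj : j < n) : j ∈ cycCoset n m j :=
  Finset.mem_image.2 ⟨0, Finset.mem_range.2 hm, by
    rw [pow_zero, one_mul, Nat.mod_eq_of_lt hj]⟩

lemma aux_O_closed (hm : 0 < m) (hn : n = 2 ^ m - 1) {j : ℕ} (hj : j < n) :
    ∀ k ∈ cycCoset n m j, 2 * k % n ∈ cycCoset n m j := by
  intro k hk
  obtain ⟨i, hi, rfl⟩ := Finset.mem_image.1 hk
  rw [← aux_double_mod]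
  rcases Nat.lt_or_ge (i + 1) m with h | h
  · exact Finset.mem_image.2 ⟨i + 1, Finset.mem_range.2 h, rfl⟩
  · have hi' := Finset.mem_range.1 hi
    have him : i + 1 = m := by omega
    rw [him]
    have h2m : 2 ^ m = n + 1 := by
      have : (1:ℕ) ≤ 2 ^ m := Nat.one_le_two_pow
      omega
    have : 2 ^ m * j % n = j := by
      rw [h2m]
      have he : (n + 1) * j = j + j * n := by ring
      rw [he, Nat.add_mul_mod_self_right, Nat.mod_eq_of_lt hj]
    rw [this]
    exact aux_O_self hm hj

lemma aux_O_mem_iter (hm : 0 < m) {j : ℕ} (i : ℕ) (hi : i < m) :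
    2 ^ i * j % n ∈ cycCoset n m j :=
  Finset.mem_image.2 ⟨i, Finset.mem_range.2 hi, rfl⟩

/-- Key lemma: a single-coset word whose coefficient conjugacy holds lies in any
"V" that is multiplication-invariant, consists of F₂-valued functions with
polynomial representation of degree < n, provided some element of V has nonzero
j-th Fourier coefficient. -/
lemma aux_coset (hm : 0 < m) (hn : n = 2 ^ m - 1) (hF : Fintype.card F = 2 ^ m)
    (V : AddSubgroup (F → F))
    (hVrep : ∀ d ∈ V, ∀ x : F, d x = ∑ k ∈ Finset.range n, acoef n d k * x ^ k)
    (hVsq : ∀ d ∈ V, ∀ x, d x ^ 2 = d x)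
    (hVinv : ∀ d ∈ V, ∀ u : F, u ≠ 0 → (fun x => d (u * x)) ∈ V)
    {j : ℕ} (hj : j < n) (d : F → F) (hd : d ∈ V) (ha : acoef n d j ≠ 0)
    (B : ℕ → F) (hB : ∀ k ∈ cycCoset n m j, B (2 * k % n) = B k ^ 2) :
    (fun x => ∑ k ∈ cycCoset n m j, B k * x ^ k) ∈ V := by
  haveI := aux_char2 hm hF
  haveI : Fact (Nat.Prime 2) := ⟨Nat.prime_two⟩
  have hnpos := aux_npos hm hn
  set O := cycCoset n m j with hO
  have hOlt : ∀ k ∈ O, k < n := fun k hk => aux_O_lt hm hn hk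
  have hOcl : ∀ k ∈ O, 2 * k % n ∈ O := aux_O_closed hm hn hj
  -- conjugacy of the Fourier coefficients of d
  have hconjall : ∀ k ∈ Finset.range n, acoef n d (2 * k % n) = acoef n d k ^ 2 :=
    fun k hk => aux_acoef_conj hm hn hF d (hVsq d hd) (Finset.mem_range.1 hk)
  have hAne : ∀ k ∈ O, acoef n d k ≠ 0 := by
    intro k hk
    obtain ⟨i, hi, rfl⟩ := Finset.mem_image.1 hk
    have := (aux_iter (Finset.range n) (fun k hk => Finset.mem_range.1 hk)
      (fun k _ => Finset.mem_range.2 (Nat.mod_lt _ hnpos)) (acoef n d) hconjall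
      (Finset.mem_range.2 hj) i).2
    rw [this]
    exact pow_ne_zero _ ha
  -- the F₂-valued multiplier coefficients
  set ε : Fˣ → F := fun u => ∑ k ∈ O, B k * (acoef n d k)⁻¹ * (u : F) ^ (n - k) with hε
  have hε2 : ∀ u, ε u ^ 2 = ε u := by
    intro u
    rw [hε]
    simp only
    rw [sum_pow_char]
    calc ∑ k ∈ O, (B k * (acoef n d k)⁻¹ * (u : F) ^ (n - k)) ^ 2
        = ∑ k ∈ O, B (2 * k % n) * (acoef n d (2 * k % n))⁻¹ *
            (u : F) ^ (n - 2 * k % n) := by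
          refine Finset.sum_congr rfl fun k hk => ?_
          rw [mul_pow, mul_pow, ← hB k hk, inv_pow,
            ← hconjall k (Finset.mem_range.2 (hOlt k hk)), ← pow_mul]
          congr 1
          exact aux_pow_eq hn hF _ (Units.ne_zero u) (aux_mod_eq hnpos (hOlt k hk))
      _ = ∑ k ∈ O.image (fun k => 2 * k % n),
            B k * (acoef n d k)⁻¹ * (u : F) ^ (n - k) := by
          rw [Finset.sum_image]
          intro a ha' b hb' hab
          exact aux_dinj hm hn (hOlt a ha') (hOlt b hb') hab
      _ = ε u := by rw [aux_image hm hn O hOlt hOcl, hε]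
  have hε01 : ∀ u, ε u = 0 ∨ ε u = 1 := by
    intro u
    have h := hε2 u
    have : ε u * (ε u - 1) = 0 := by linear_combination h
    rcases mul_eq_zero.1 this with h' | h'
    · exact Or.inl h'
    · exact Or.inr (by rwa [sub_eq_zero] at h')
  set T : Finset Fˣ := Finset.univ.filter (fun u => ε u = 1) with hT
  have key : ∀ x : F, (∑ k ∈ O, B k * x ^ k) = ∑ u ∈ T, d ((u : F) * x) := by
    intro x
    have hTsum : ∀ l : ℕ, (∑ u ∈ T, (u : F) ^ l) =
        ∑ u : Fˣ, ε u * (u : F) ^ l := by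
      intro l
      rw [hT, Finset.sum_filter]
      refine Finset.sum_congr rfl fun u _ => ?_
      by_cases h : ε u = 1
      · rw [if_pos h, h, one_mul]
      · rw [if_neg h]
        rcases hε01 u with h' | h'
        · rw [h', zero_mul]
        · exact absurd h' h
    have hTval : ∀ l, l < n → (∑ u ∈ T, (u : F) ^ l) =
        if l ∈ O then B l * (acoef n d l)⁻¹ else 0 := by
      intro l hl
      rw [hTsum l]
      calc ∑ u : Fˣ, ε u * (u : F) ^ l
          = ∑ u : Fˣ, ∑ k ∈ O, B k * (acoef n d k)⁻¹ * (u : F) ^ ((n - k) + l) := by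
            refine Finset.sum_congr rfl fun u _ => ?_
            rw [hε]
            simp only
            rw [Finset.sum_mul]
            exact Finset.sum_congr rfl fun k _ => by rw [pow_add, mul_assoc]
        _ = ∑ k ∈ O, B k * (acoef n d k)⁻¹ * ∑ u : Fˣ, (u : F) ^ ((n - k) + l) := by
            rw [Finset.sum_comm]
            exact Finset.sum_congr rfl fun k _ => by rw [Finset.mul_sum]
        _ = ∑ k ∈ O, (if k = l then B k * (acoef n d k)⁻¹ else 0) := by
            refine Finset.sum_congr rfl fun k hk => ?_
            rw [aux_sum_pow hm hn hF]
            have hiff : (n ∣ (n - k) + l) ↔ l = k := by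
              rw [Nat.add_comm]
              exact aux_dvd_iff hnpos hl (hOlt k hk)
            by_cases hcase : k = l
            · rw [if_pos hcase, if_pos (hiff.mpr hcase.symm), mul_one]
            · rw [if_neg hcase, if_neg (fun hdd => hcase (hiff.mp hdd).symm), mul_zero]
        _ = if l ∈ O then B l * (acoef n d l)⁻¹ else 0 :=
            Finset.sum_ite_eq' O l (fun k => B k * (acoef n d k)⁻¹)
    calc ∑ k ∈ O, B k * x ^ k
        = ∑ l ∈ Finset.range n,
            acoef n d l * (if l ∈ O then B l * (acoef n d l)⁻¹ else 0) * x ^ l := by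
          symm
          calc ∑ l ∈ Finset.range n,
              acoef n d l * (if l ∈ O then B l * (acoef n d l)⁻¹ else 0) * x ^ l
              = ∑ l ∈ Finset.range n, (if l ∈ O then B l * x ^ l else 0) := by
                refine Finset.sum_congr rfl fun l hl => ?_
                by_cases hcase : l ∈ O
                · rw [if_pos hcase, if_pos hcase,
                    mul_comm (B l) (acoef n d l)⁻¹, ← mul_assoc,
                    mul_inv_cancel₀ (hAne l hcase), one_mul]
                · rw [if_neg hcase, if_neg hcase, mul_zero, zero_mul]
            _ = ∑ l ∈ Finset.range n ∩ O, B l * x ^ l := Finset.sum_ite_mem _ _ _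
            _ = ∑ l ∈ O, B l * x ^ l := by
                rw [Finset.inter_eq_right.2 fun k hk => Finset.mem_range.2 (hOlt k hk)]
      _ = ∑ l ∈ Finset.range n, acoef n d l * (∑ u ∈ T, (u : F) ^ l) * x ^ l := by
          refine Finset.sum_congr rfl fun l hl => ?_
          rw [hTval l (Finset.mem_range.1 hl)]
      _ = ∑ u ∈ T, d ((u : F) * x) := by
          symm
          calc ∑ u ∈ T, d ((u : F) * x)
              = ∑ u ∈ T, ∑ l ∈ Finset.range n, acoef n d l * ((u : F) ^ l * x ^ l) := by
                refine Finset.sum_congr rfl fun u _ => ?_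
                rw [hVrep d hd ((u : F) * x)]
                exact Finset.sum_congr rfl fun l _ => by rw [mul_pow]
            _ = ∑ l ∈ Finset.range n, ∑ u ∈ T, acoef n d l * ((u : F) ^ l * x ^ l) :=
                Finset.sum_comm
            _ = ∑ l ∈ Finset.range n, acoef n d l * (∑ u ∈ T, (u : F) ^ l) * x ^ l := by
                refine Finset.sum_congr rfl fun l _ => ?_
                rw [← Finset.mul_sum, ← Finset.sum_mul, ← mul_assoc]
  have heq : (fun x => ∑ k ∈ O, B k * x ^ k) = ∑ u ∈ T, (fun x : F => d ((u : F) * x)) := by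
    funext x
    rw [key x]
    exact (Finset.sum_apply x T fun u => fun y => d ((u : F) * y)).symm
  rw [heq]
  exact AddSubgroup.sum_mem V fun u _ => hVinv d hd _ (Units.ne_zero u)

end Aux3

section Aux4

variable {m n : ℕ} {F : Type*} [Field F] [Fintype F]

/-- Every codeword supported on a doubling-closed set, all of whose cosets meet the
Fourier support of `V`, lies in `V`. -/
lemma aux_main (hm : 0 < m) (hn : n = 2 ^ m - 1) (hF : Fintype.card F = 2 ^ m)
    (V : AddSubgroup (F → F))
    (hVrep : ∀ d ∈ V, ∀ x : F, d x = ∑ k ∈ Finset.range n, acoef n d k * x ^ k)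
    (hVsq : ∀ d ∈ V, ∀ x, d x ^ 2 = d x)
    (hVinv : ∀ d ∈ V, ∀ u : F, u ≠ 0 → (fun x => d (u * x)) ∈ V)
    (SS : Finset ℕ) (hSS1 : ∀ k ∈ SS, k < n)
    (hSS3 : ∀ j ∈ SS, ∃ d ∈ V, acoef n d j ≠ 0) :
    ∀ N (U : Finset ℕ), U.card ≤ N → U ⊆ SS → (∀ k ∈ U, 2 * k % n ∈ U) →
      ∀ B : ℕ → F, (∀ k ∈ U, B (2 * k % n) = B k ^ 2) →
      (fun x => ∑ j ∈ U, B j * x ^ j) ∈ V := by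
  intro N
  induction N with
  | zero =>
    intro U hcard _ _ B _
    have hU : U = ∅ := Finset.card_eq_zero.1 (Nat.le_zero.1 hcard)
    subst hU
    have h0 : (fun x : F => ∑ j ∈ (∅ : Finset ℕ), B j * x ^ j) = 0 := by
      funext x; simp
    rw [h0]; exact V.zero_mem
  | succ N ih =>
    intro U hcard hUS hUcl B hBconj
    rcases U.eq_empty_or_nonempty with rfl | ⟨j, hjU⟩
    · have h0 : (fun x : F => ∑ j ∈ (∅ : Finset ℕ), B j * x ^ j) = 0 := by
        funext x; simp
      rw [h0]; exact V.zero_mem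
    · have hjn : j < n := hSS1 j (hUS hjU)
      set O := cycCoset n m j with hO
      have hOlt : ∀ k ∈ O, k < n := fun k hk => aux_O_lt hm hn hk
      have hOcl : ∀ k ∈ O, 2 * k % n ∈ O := aux_O_closed hm hn hjn
      have hOU : O ⊆ U := by
        intro k hk
        obtain ⟨i, hi, rfl⟩ := Finset.mem_image.1 hk
        exact (aux_iter U (fun k hk => hSS1 k (hUS hk)) hUcl B hBconj hjU i).1
      have hsplit : (fun x : F => ∑ k ∈ U, B k * x ^ k)
          = (fun x : F => ∑ k ∈ O, B k * x ^ k)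
            + (fun x : F => ∑ k ∈ U \ O, B k * x ^ k) := by
        funext x
        have hsd := Finset.sum_sdiff (f := fun k => B k * x ^ k) hOU
        rw [Pi.add_apply, ← hsd, add_comm]
      rw [hsplit]
      refine V.add_mem ?_ ?_
      · obtain ⟨d, hd, ha⟩ := hSS3 j (hUS hjU)
        exact aux_coset hm hn hF V hVrep hVsq hVinv hjn d hd ha B
          (fun k hk => hBconj k (hOU hk))
      · have himg : O.image (fun k => 2 * k % n) = O := aux_image hm hn O hOlt hOcl
        refine ih (U \ O) ?_ (fun k hk => hUS (Finset.mem_sdiff.1 hk).1) ?_ B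
          (fun k hk => hBconj k (Finset.mem_sdiff.1 hk).1)
        · have h1 : 1 ≤ O.card := Finset.card_pos.2 ⟨j, aux_O_self hm hjn⟩
          have h2 : (U \ O).card = U.card - O.card := Finset.card_sdiff_of_subset hOU
          omega
        · intro k hk
          obtain ⟨hkU, hkO⟩ := Finset.mem_sdiff.1 hk
          refine Finset.mem_sdiff.2 ⟨hUcl k hkU, fun hmem => hkO ?_⟩
          rw [← himg] at hmem
          obtain ⟨k₀, hk₀, hkk⟩ := Finset.mem_image.1 hmem
          have hkeq : k₀ = k := aux_dinj hm hn (hOlt k₀ hk₀) (hSS1 k (hUS hkU)) hkk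
          exact hkeq ▸ hk₀

end Aux4


/-- Proposition 7: for an extended cyclic code `C`, the cyclic derivative
descendant `D(C)` (the smallest extended cyclic code containing the derivatives of
the codewords of `C`, in any nonzero direction) equals the sum of all the minimal
derivative descendants `D_β(C)`, `β ∈ F^*`.  Since all codewords take values in
`F₂` (so the code is an `F₂`-space, char `F` = 2), the subspace sum is the
additive subgroup generated by the union of the `D_β(C)`. -/
theorem cyclicDD_eq_sum_of_minimalDDs (m : ℕ) (hm : 0 < m)
    (n : ℕ) (hn : n = 2 ^ m - 1)
    {F : Type*} [Field F] [Fintype F] (hF : Fintype.card F = 2 ^ m)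
    (S : Finset ℕ) (hS : IsExpSet n S)
    (SD : Finset ℕ) (hSD : IsExpSet n SD)
    (hcont : ∀ β : F, β ≠ 0 →
      derivSet β (extCyclicCode n S) ⊆ (extCyclicCode n SD : Set (F → F)))
    (hmin : ∀ β : F, β ≠ 0 → ∀ S' : Finset ℕ, IsExpSet n S' →
      derivSet β (extCyclicCode n S) ⊆ (extCyclicCode n S' : Set (F → F)) →
      (extCyclicCode n SD : Set (F → F)) ⊆ extCyclicCode n S') :
    (extCyclicCode n SD : Set (F → F))
      = ↑(AddSubgroup.closure
          (⋃ β ∈ {β : F | β ≠ 0}, derivSet β (extCyclicCode n S))) := by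
  haveI hchar : CharP F 2 := aux_char2 hm hF
  haveI : Fact (Nat.Prime 2) := ⟨Nat.prime_two⟩
  have hnpos := aux_npos hm hn
  set G : Set (F → F) := ⋃ β ∈ {β : F | β ≠ 0}, derivSet β (extCyclicCode n S) with hG
  set V := AddSubgroup.closure G with hV
  have hneg : ∀ g : F → F, -g = g := fun g => funext fun x => by
    rw [Pi.neg_apply]; exact CharTwo.neg_eq _
  -- the code with exponent set SD is an additive subgroup
  let W : AddSubgroup (F → F) :=
  { carrier := extCyclicCode n SD
    add_mem' := by
      rintro a b ⟨A, hAc, hAr⟩ ⟨A', hA'c, hA'r⟩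
      refine ⟨fun j => A j + A' j, fun j hj => ?_, fun x => ?_⟩
      · show A (2 * j % n) + A' (2 * j % n) = (A j + A' j) ^ 2
        rw [hAc j hj, hA'c j hj, CharTwo.add_sq]
      · rw [Pi.add_apply, hAr x, hA'r x, ← Finset.sum_add_distrib]
        exact Finset.sum_congr rfl fun j _ => by ring
    zero_mem' := ⟨0, by simp, fun x => by simp⟩
    neg_mem' := by intro a ha; rwa [hneg a] }
  have hWle : V ≤ W :=
    (AddSubgroup.closure_le W).2 (Set.iUnion₂_subset fun β hβ => hcont β hβ)
  -- all elements of V are F₂-valued and have a polynomial representation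
  let GOODS : AddSubgroup (F → F) :=
  { carrier := {d | (∃ A : ℕ → F, ∀ x, d x = ∑ j ∈ Finset.range n, A j * x ^ j)
      ∧ ∀ x, d x ^ 2 = d x}
    add_mem' := by
      rintro a b ⟨⟨A, hA⟩, ha2⟩ ⟨⟨A', hA'⟩, hb2⟩
      refine ⟨⟨fun j => A j + A' j, fun x => ?_⟩, fun x => ?_⟩
      · rw [Pi.add_apply, hA x, hA' x, ← Finset.sum_add_distrib]
        exact Finset.sum_congr rfl fun j _ => by ring
      · rw [Pi.add_apply, CharTwo.add_sq, ha2 x, hb2 x]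
    zero_mem' := ⟨⟨0, fun x => by simp⟩, fun x => by simp⟩
    neg_mem' := by intro a ha; rwa [hneg a] }
  have hVgood : V ≤ GOODS := by
    apply (AddSubgroup.closure_le GOODS).2
    intro d hd
    obtain ⟨β, hβ, hdm⟩ := Set.mem_iUnion₂.1 hd
    obtain ⟨c, hc, rfl⟩ := hdm
    have hc2 := aux_code_sq hm hn hF S hS c hc
    obtain ⟨A, hAc, hAr⟩ := hc
    constructor
    · exact aux_deriv_rep S hS.1 A c hAr β
    · intro x
      show (c (x + β) - c x) ^ 2 = c (x + β) - c x
      rw [sub_eq_add_neg, CharTwo.neg_eq, CharTwo.add_sq, hc2 (x + β), hc2 x]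
  have hVrep : ∀ d ∈ V, ∀ x : F, d x = ∑ k ∈ Finset.range n, acoef n d k * x ^ k :=
    fun d hd => aux_inv hm hn hF d (hVgood hd).1
  have hVsq : ∀ d ∈ V, ∀ x, d x ^ 2 = d x := fun d hd => (hVgood hd).2
  -- V is invariant under multiplicative shifts
  have hVinv : ∀ d ∈ V, ∀ u : F, u ≠ 0 → (fun x => d (u * x)) ∈ V := by
    intro d hd u hu
    let φ : (F → F) →+ (F → F) :=
    { toFun := fun g => fun x => g (u * x)
      map_zero' := rfl
      map_add' := fun a b => rfl }
    have hle : V ≤ AddSubgroup.comap φ V := by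
      rw [hV]
      apply (AddSubgroup.closure_le _).2
      intro g hg
      obtain ⟨β, hβ, hgm⟩ := Set.mem_iUnion₂.1 hg
      obtain ⟨c, hc, rfl⟩ := hgm
      show (fun x => c (u * x + β) - c (u * x)) ∈ V
      have hβ' : (β * u⁻¹ : F) ∈ {β : F | β ≠ 0} := mul_ne_zero hβ (inv_ne_zero hu)
      refine AddSubgroup.subset_closure (Set.mem_biUnion hβ' ?_)
      refine ⟨fun y => c (u * y), aux_code_mul hm hn hF S hS c hc u hu, ?_⟩
      funext x
      have harg : u * (x + β * u⁻¹) = u * x + β := by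
        field_simp
      simp only [harg]
    exact hle hd
  -- choose a nonzero direction
  obtain ⟨β₀, hβ₀⟩ : ∃ β₀ : F, β₀ ≠ 0 := exists_ne 0
  -- the exponent set of V
  set S'' : Finset ℕ := (Finset.range n).filter
    (fun k => ∃ d ∈ (V : Set (F → F)), acoef n d k ≠ 0) with hS''
  have hS''lt : ∀ k ∈ S'', k < n := fun k hk =>
    Finset.mem_range.1 (Finset.mem_filter.1 hk).1
  have hS''exp : IsExpSet n S'' := by
    refine ⟨hS''lt, fun j hj => ?_⟩
    obtain ⟨hj1, d, hd, ha⟩ := Finset.mem_filter.1 hj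
    refine Finset.mem_filter.2 ⟨Finset.mem_range.2 (Nat.mod_lt _ hnpos), ?_⟩
    refine ⟨d, hd, ?_⟩
    rw [aux_acoef_conj hm hn hF d (hVsq d hd) (Finset.mem_range.1 hj1)]
    exact pow_ne_zero _ ha
  have hsubderiv : derivSet β₀ (extCyclicCode n S)
      ⊆ (extCyclicCode n S'' : Set (F → F)) := by
    intro d hd
    have hdV : d ∈ V := AddSubgroup.subset_closure (Set.mem_biUnion hβ₀ hd)
    refine ⟨acoef n d, fun j hj => aux_acoef_conj hm hn hF d (hVsq d hdV)
      (hS''lt j hj), fun x => ?_⟩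
    rw [hVrep d hdV x]
    symm
    refine Finset.sum_subset (Finset.filter_subset _ _) fun k hk hk2 => ?_
    have hz : acoef n d k = 0 := by
      by_contra hne
      exact hk2 (Finset.mem_filter.2 ⟨hk, ⟨d, hdV, hne⟩⟩)
    rw [hz, zero_mul]
  have hSDsub : (extCyclicCode n SD : Set (F → F)) ⊆ extCyclicCode n S'' :=
    hmin β₀ hβ₀ S'' hS''exp hsubderiv
  apply Set.Subset.antisymm
  · intro c hc
    obtain ⟨A, hAc, hAr⟩ := hSDsub hc
    have hceq : c = fun x => ∑ j ∈ S'', A j * x ^ j := funext hAr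
    rw [SetLike.mem_coe, hceq]
    exact aux_main hm hn hF V hVrep hVsq hVinv S'' hS''lt
      (fun j hj => (Finset.mem_filter.1 hj).2)
      S''.card S'' le_rfl (subset_refl _) hS''exp.2 A hAc
  · intro c hc
    exact hWle hc
end

section
/- For 1 ≤ r ≤ m−1, the cyclic derivative descendant of the extended cyclic code with exponent set {j ∈ {0,…,2^m−2} : wt(j̄) ≤ r} (the Reed–Muller code RM(r,m)) is the extended cyclic code with exponent set {j ∈ {0,…,2^m−2} : wt(j̄) ≤ r−1} (the Reed–Muller code RM(r−1,m)). Equivalently, ∪_{s∈cr(S)} cc(P(s)) = {j : wt(j̄) ≤ r−1} where S = {j : wt(j̄) ≤ r}. -/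
open Finset

section Bits

variable {m j k : ℕ}

lemma bitIndices_subset_range (hj : j < 2 ^ m) : j.bitIndices.toFinset ⊆ range m := by
  intro i hi
  rw [List.mem_toFinset, Nat.mem_bitIndices] at hi
  exact mem_range.2 ((Nat.pow_lt_pow_iff_right (by norm_num)).1
    ((Nat.ge_two_pow_of_testBit hi).trans_lt hj))

lemma wtm_eq_card_bitIndices (hj : j < 2 ^ m) : wtm m j = #j.bitIndices.toFinset := by
  rw [wtm]
  congr 1
  ext i
  have hsub := @bitIndices_subset_range _ _ hj i
  simp only [mem_filter, mem_range, List.mem_toFinset, Nat.mem_bitIndices] at hsub ⊢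
  exact ⟨fun h => h.2, fun h => ⟨hsub h, h⟩⟩

lemma bitIndices_injective (h : k.bitIndices.toFinset = j.bitIndices.toFinset) : k = j :=
  Finset.equivBitIndices.injective h

lemma le_of_bitIndices_subset (h : k.bitIndices.toFinset ⊆ j.bitIndices.toFinset) : k ≤ j := by
  rw [← sum_toFinset_bitIndices_two_pow k, ← sum_toFinset_bitIndices_two_pow j]
  exact sum_le_sum_of_subset h

lemma or_eq_right_iff_bitIndices_subset :
    k ||| j = j ↔ k.bitIndices.toFinset ⊆ j.bitIndices.toFinset := by
  simp only [subset_iff, List.mem_toFinset, Nat.mem_bitIndices]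
  constructor
  · intro h i hk
    rw [← h, Nat.testBit_or, hk, Bool.true_or]
  · intro h
    refine Nat.eq_of_testBit_eq fun i => ?_
    rw [Nat.testBit_or]
    cases hk : k.testBit i
    · rfl
    · rw [h hk, Bool.or_true]

lemma mem_Pset_iff : k ∈ Pset j ↔ k.bitIndices.toFinset ⊂ j.bitIndices.toFinset := by
  rw [Pset, mem_filter, mem_range, or_eq_right_iff_bitIndices_subset, ssubset_iff_subset_ne]
  constructor
  · rintro ⟨-, hsub, hne⟩
    exact ⟨hsub, fun h => hne (bitIndices_injective h)⟩
  · rintro ⟨hsub, hne⟩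
    exact ⟨Nat.lt_succ_of_le (le_of_bitIndices_subset hsub), hsub, fun h => hne (h ▸ rfl)⟩

lemma mem_insert_Pset_iff :
    k ∈ insert j (Pset j) ↔ k.bitIndices.toFinset ⊆ j.bitIndices.toFinset := by
  rw [mem_insert, mem_Pset_iff, ssubset_iff_subset_ne]
  constructor
  · rintro (rfl | h)
    exacts [subset_rfl, h.1]
  · intro h
    by_cases hkj : k = j
    · exact Or.inl hkj
    · exact Or.inr ⟨h, fun e => hkj (bitIndices_injective e)⟩

lemma lt_of_mem_Pset (h : k ∈ Pset j) : k < j := by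
  simp only [Pset, mem_filter, mem_range] at h
  omega

lemma wtm_lt_wtm_of_mem_Pset (hj : j < 2 ^ m) (h : k ∈ Pset j) : wtm m k < wtm m j := by
  rw [wtm_eq_card_bitIndices ((lt_of_mem_Pset h).trans hj), wtm_eq_card_bitIndices hj]
  exact card_lt_card (mem_Pset_iff.1 h)

lemma wtm_two_pow_sub_one (m : ℕ) : wtm m (2 ^ m - 1) = m := by
  rw [wtm, filter_true_of_mem fun i hi => by simpa using mem_range.1 hi, card_range]

lemma exists_mem_Pset_wtm_eq_succ (hk : k < 2 ^ m) (h : wtm m k < m) :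
    ∃ s < 2 ^ m, k ∈ Pset s ∧ wtm m s = wtm m k + 1 := by
  rw [wtm_eq_card_bitIndices hk] at h ⊢
  have hsub := bitIndices_subset_range hk
  obtain ⟨b, hb, hbk⟩ := exists_of_ssubset
    (ssubset_of_subset_of_ne hsub (fun e => by simp [e] at h))
  set T := insert b k.bitIndices.toFinset
  have hT : T ⊆ range m := insert_subset hb hsub
  have hbits : (∑ i ∈ T, 2 ^ i).bitIndices.toFinset = T := toFinset_bitIndices_sum_two_pow T
  have hlt : ∑ i ∈ T, 2 ^ i < 2 ^ m := Nat.geomSum_lt le_rfl fun i hi => mem_range.1 (hT hi)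
  refine ⟨∑ i ∈ T, 2 ^ i, hlt, ?_, ?_⟩
  · rw [mem_Pset_iff, hbits]
    exact ssubset_insert hbk
  · rw [wtm_eq_card_bitIndices hlt, hbits, card_insert_of_notMem hbk]

end Bits

section Lucas

variable {R : Type*} [CommRing R] [CharP R 2]

theorem add_pow_eq_sum_insert_Pset (x y : R) (j : ℕ) :
    (x + y) ^ j = ∑ k ∈ insert j (Pset j), y ^ (j - k) * x ^ k := by
  set B := j.bitIndices.toFinset
  have hB : ∑ b ∈ B, 2 ^ b = j := sum_toFinset_bitIndices_two_pow j
  calc (x + y) ^ j = ∏ b ∈ B, (x ^ 2 ^ b + y ^ 2 ^ b) := by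
        conv_lhs => rw [← hB, ← prod_pow_eq_pow_sum]
        exact prod_congr rfl fun b _ => add_pow_char_pow x y 2 b
    _ = ∑ T ∈ B.powerset, x ^ (∑ b ∈ T, 2 ^ b) * y ^ (∑ b ∈ B \ T, 2 ^ b) := by
        simp only [prod_add, prod_pow_eq_pow_sum]
    _ = ∑ k ∈ insert j (Pset j), y ^ (j - k) * x ^ k := by
        refine sum_nbij' (fun T => ∑ b ∈ T, 2 ^ b) (fun k => k.bitIndices.toFinset)
          (fun T hT => ?_) (fun k hk => ?_) (fun T _ => toFinset_bitIndices_sum_two_pow T)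
          (fun k _ => sum_toFinset_bitIndices_two_pow k) (fun T hT => ?_)
        · rw [mem_insert_Pset_iff, toFinset_bitIndices_sum_two_pow]
          exact mem_powerset.1 hT
        · exact mem_powerset.2 (mem_insert_Pset_iff.1 hk)
        · have hsplit := sum_sdiff (f := fun b => 2 ^ b) (mem_powerset.1 hT)
          rw [hB] at hsplit
          rw [mul_comm, ← hsplit, Nat.add_sub_cancel]

theorem add_pow_sub_pow_eq_sum_Pset (x y : R) (j : ℕ) :
    (x + y) ^ j - x ^ j = ∑ k ∈ Pset j, y ^ (j - k) * x ^ k := by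
  rw [add_pow_eq_sum_insert_Pset, sum_insert fun h => (lt_of_mem_Pset h).false, Nat.sub_self,
    pow_zero, one_mul, add_sub_cancel_left]

theorem sum_mul_add_pow_sub_sum_mul_pow {ι : Type*} (U : Finset ι) (e : ι → ℕ) (c : ι → R)
    {T : Finset ℕ} (hT : ∀ i ∈ U, Pset (e i) ⊆ T) (x y : R) :
    ∑ i ∈ U, c i * (x + y) ^ e i - ∑ i ∈ U, c i * x ^ e i
      = ∑ k ∈ T, (∑ i ∈ U, (if k ∈ Pset (e i) then y ^ (e i - k) else 0) * c i) * x ^ k := by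
  classical
  have hterm : ∀ i ∈ U, c i * (x + y) ^ e i - c i * x ^ e i
      = ∑ k ∈ T, (if k ∈ Pset (e i) then y ^ (e i - k) else 0) * c i * x ^ k := by
    intro i hi
    simp only [ite_mul, zero_mul]
    rw [sum_ite_mem, inter_eq_right.2 (hT i hi), ← mul_sub, add_pow_sub_pow_eq_sum_Pset,
      mul_sum]
    exact sum_congr rfl fun k _ => by ring
  rw [← sum_sub_distrib, sum_congr rfl hterm, sum_comm]
  simp only [sum_mul]

end Lucas

section Rotation

variable {m n i j k : ℕ}

lemma pos_of_lt_two_pow_sub_one (hn : n = 2 ^ m - 1) (hj : j < n) : 0 < m := by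
  rcases m with _ | m
  · rw [pow_zero, Nat.sub_self] at hn
    omega
  · exact m.succ_pos

lemma two_pow_modEq_two_pow_mod (hn : n = 2 ^ m - 1) (a : ℕ) : 2 ^ a ≡ 2 ^ (a % m) [MOD n] := by
  have h : 2 ^ m ≡ 1 [MOD n] := ((Nat.modEq_iff_dvd' Nat.one_le_two_pow).2 (hn ▸ dvd_rfl)).symm
  calc 2 ^ a = (2 ^ m) ^ (a / m) * 2 ^ (a % m) := by rw [← pow_mul, ← pow_add, Nat.div_add_mod]
    _ ≡ 1 ^ (a / m) * 2 ^ (a % m) [MOD n] := (h.pow _).mul_right _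
    _ = 2 ^ (a % m) := by rw [one_pow, one_mul]

lemma two_pow_mul_two_pow_mul_mod (hn : n = 2 ^ m - 1) (a b j : ℕ) :
    2 ^ a * (2 ^ b * j % n) % n = 2 ^ ((a + b) % m) * j % n :=
  calc 2 ^ a * (2 ^ b * j % n) % n = 2 ^ (a + b) * j % n := by
        rw [Nat.mul_mod_mod, pow_add, mul_assoc]
    _ = 2 ^ ((a + b) % m) * j % n := (two_pow_modEq_two_pow_mod hn _).mul_right j

lemma two_pow_mul_two_pow_mul_mod_of_add_eq (hn : n = 2 ^ m - 1) (hj : j < n) {a b : ℕ}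
    (hab : a + b = m) : 2 ^ a * (2 ^ b * j % n) % n = j := by
  rw [two_pow_mul_two_pow_mul_mod hn, hab, Nat.mod_self, pow_zero, one_mul, Nat.mod_eq_of_lt hj]

lemma eq_of_two_mul_mod_eq (hn : n = 2 ^ m - 1) (hk : k < n) (hj : j < n)
    (h : 2 * k % n = 2 * j % n) : k = j := by
  have hm := pos_of_lt_two_pow_sub_one hn hj
  rw [← two_pow_mul_two_pow_mul_mod_of_add_eq hn hk (Nat.sub_add_cancel hm),
    ← two_pow_mul_two_pow_mul_mod_of_add_eq hn hj (Nat.sub_add_cancel hm), pow_one, h]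

lemma injOn_add_mod (i m : ℕ) : Set.InjOn (fun b => (b + i) % m) (range m) := by
  intro a ha b hb h
  have h' : a % m = b % m := Nat.ModEq.add_right_cancel' i h
  rwa [Nat.mod_eq_of_lt (mem_range.1 ha), Nat.mod_eq_of_lt (mem_range.1 hb)] at h'

lemma bitIndices_two_pow_mul_mod (hn : n = 2 ^ m - 1) (hj : j < n) (i : ℕ) :
    (2 ^ i * j % n).bitIndices.toFinset
      = j.bitIndices.toFinset.image fun b => (b + i) % m := by
  have hm := pos_of_lt_two_pow_sub_one hn hj
  have hsum : ∑ t ∈ range m, 2 ^ t = n := by rw [Nat.geomSum_eq le_rfl, hn, Nat.div_one]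
  set B := j.bitIndices.toFinset
  have hB : B ⊆ range m := bitIndices_subset_range (by omega)
  have hinj := (injOn_add_mod i m).mono (coe_subset.2 hB)
  set T := B.image fun b => (b + i) % m
  have hT : T ⊆ range m := image_subset_iff.2 fun b _ => mem_range.2 (Nat.mod_lt _ hm)
  have hTne : T ≠ range m := by
    intro hT'
    have hBm : B = range m :=
      eq_of_subset_of_card_le hB (by rw [← hT', card_image_of_injOn hinj])
    have : j = n := by rw [← sum_toFinset_bitIndices_two_pow j, ← hsum, ← hBm]
    omega
  have hlt : ∑ t ∈ T, 2 ^ t < n := by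
    obtain ⟨c, hc, hcT⟩ := exists_of_ssubset (ssubset_of_subset_of_ne hT hTne)
    rw [← hsum]
    exact sum_lt_sum_of_subset hT hc hcT (by positivity) fun _ _ _ => Nat.zero_le _
  have hmod : ∑ t ∈ T, 2 ^ t ≡ 2 ^ i * j [MOD n] :=
    calc ∑ t ∈ T, 2 ^ t = ∑ b ∈ B, 2 ^ ((b + i) % m) := sum_image hinj
      _ ≡ ∑ b ∈ B, 2 ^ (b + i) [MOD n] :=
        Nat.ModEq.sum fun b _ => (two_pow_modEq_two_pow_mod hn _).symm
      _ = 2 ^ i * j := by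
        conv_rhs => rw [← sum_toFinset_bitIndices_two_pow j]
        rw [mul_sum]
        exact sum_congr rfl fun b _ => by rw [pow_add, mul_comm]
  rw [← hmod, Nat.mod_eq_of_lt hlt, toFinset_bitIndices_sum_two_pow]

lemma wtm_two_pow_mul_mod (hn : n = 2 ^ m - 1) (hj : j < n) (i : ℕ) :
    wtm m (2 ^ i * j % n) = wtm m j := by
  have hlt : 2 ^ i * j % n < 2 ^ m := (Nat.mod_lt _ (by omega)).trans_le (by omega)
  rw [wtm_eq_card_bitIndices hlt, wtm_eq_card_bitIndices (by omega),
    bitIndices_two_pow_mul_mod hn hj, card_image_of_injOn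
      ((injOn_add_mod i m).mono (coe_subset.2 (bitIndices_subset_range (by omega))))]

lemma two_pow_mul_mod_mem_Pset_iff (hn : n = 2 ^ m - 1) (hk : k < n) (hj : j < n) (i : ℕ) :
    2 ^ i * k % n ∈ Pset (2 ^ i * j % n) ↔ k ∈ Pset j := by
  have hk' := bitIndices_subset_range (m := m) (show k < 2 ^ m by omega)
  have hj' := bitIndices_subset_range (m := m) (show j < 2 ^ m by omega)
  rw [mem_Pset_iff, mem_Pset_iff, bitIndices_two_pow_mul_mod hn hk,
    bitIndices_two_pow_mul_mod hn hj]
  exact lt_iff_lt_of_le_iff_le'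
    (image_subset_image_iff_of_injOn (injOn_add_mod i m) hj' hk')
    (image_subset_image_iff_of_injOn (injOn_add_mod i m) hk' hj')

lemma IsExpSet.two_pow_mul_mod_mem {S : Finset ℕ} (hS : IsExpSet n S) {s : ℕ} (hs : s ∈ S)
    (i : ℕ) : 2 ^ i * s % n ∈ S := by
  induction i with
  | zero => rwa [pow_zero, one_mul, Nat.mod_eq_of_lt (hS.1 s hs)]
  | succ i ih =>
    rw [pow_succ', mul_assoc, ← Nat.mul_mod_mod]
    exact hS.2 _ ih

lemma IsExpSet.ccSet_subset {S : Finset ℕ} (hS : IsExpSet n S) : ccSet n m S ⊆ S :=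
  biUnion_subset.2 fun _ hs => image_subset_iff.2 fun i _ => hS.two_pow_mul_mod_mem hs i

lemma ccSet_mono {S T : Finset ℕ} (h : S ⊆ T) : ccSet n m S ⊆ ccSet n m T :=
  biUnion_subset_biUnion_of_subset_left _ h

lemma mem_cycCoset_two_pow_mul_mod (hn : n = 2 ^ m - 1) (hj : j < n) (hi : i < m) :
    j ∈ cycCoset n m (2 ^ i * j % n) := by
  refine mem_image.2 ⟨(m - i) % m, mem_range.2 (Nat.mod_lt _ (by omega)), ?_⟩
  rw [two_pow_mul_two_pow_mul_mod hn, Nat.mod_add_mod, Nat.sub_add_cancel hi.le, Nat.mod_self,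
    pow_zero, one_mul, Nat.mod_eq_of_lt hj]

lemma cycCoset_two_pow_mul_mod_subset (hn : n = 2 ^ m - 1) (i t : ℕ) :
    cycCoset n m (2 ^ i * t % n) ⊆ cycCoset n m t := by
  intro x hx
  obtain ⟨a, ha, rfl⟩ := mem_image.1 hx
  exact mem_image.2 ⟨(a + i) % m, mem_range.2 (Nat.mod_lt _ (Nat.zero_lt_of_lt (mem_range.1 ha))),
    (two_pow_mul_two_pow_mul_mod hn a i t).symm⟩

lemma exists_two_pow_mul_mod_mem_crSet (hn : n = 2 ^ m - 1) {S : Finset ℕ} {s : ℕ}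
    (hs : s ∈ S) (hsn : s < n) : ∃ i < m, 2 ^ i * s % n ∈ crSet n m S := by
  have hne : (cycCoset n m s).Nonempty :=
    ⟨_, mem_image_of_mem _ (mem_range.2 (pos_of_lt_two_pow_sub_one hn hsn))⟩
  obtain ⟨i, hi, hmin⟩ := mem_image.1 (min'_mem _ hne)
  refine ⟨i, mem_range.1 hi, mem_filter.2 ⟨mem_biUnion.2 ⟨s, hs, hmin ▸ min'_mem _ hne⟩, ?_⟩⟩
  intro t ht
  rw [hmin]
  exact min'_le _ _ (cycCoset_two_pow_mul_mod_subset hn i s ht)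

end Rotation

section ReedMuller

def rmExponents (n m r : ℕ) : Finset ℕ := (range n).filter fun j => wtm m j ≤ r

variable {m n r j : ℕ}

lemma mem_rmExponents : j ∈ rmExponents n m r ↔ j < n ∧ wtm m j ≤ r := by
  rw [rmExponents, mem_filter, mem_range]

lemma two_mul_mod_mem_rmExponents_iff (hn : n = 2 ^ m - 1) (hj : j < n) :
    2 * j % n ∈ rmExponents n m r ↔ j ∈ rmExponents n m r := by
  have h := wtm_two_pow_mul_mod hn hj 1
  rw [pow_one] at h
  rw [mem_rmExponents, mem_rmExponents, h]
  exact and_congr_left' ⟨fun _ => hj, fun _ => Nat.mod_lt _ (by omega)⟩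

lemma isExpSet_rmExponents (hn : n = 2 ^ m - 1) : IsExpSet n (rmExponents n m r) :=
  ⟨fun _ hj => (mem_rmExponents.1 hj).1,
    fun _ hj => (two_mul_mod_mem_rmExponents_iff hn (mem_rmExponents.1 hj).1).2 hj⟩

lemma Pset_subset_rmExponents_pred (hn : n = 2 ^ m - 1) (hj : j ∈ rmExponents n m r) :
    Pset j ⊆ rmExponents n m (r - 1) := by
  intro k hk
  obtain ⟨hjn, hjr⟩ := mem_rmExponents.1 hj
  have := wtm_lt_wtm_of_mem_Pset (m := m) (by omega) hk
  exact mem_rmExponents.2 ⟨(lt_of_mem_Pset hk).trans hjn, by omega⟩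

lemma exists_mem_Pset_of_mem_rmExponents_pred (hn : n = 2 ^ m - 1) (hr : 1 ≤ r) (hrm : r < m)
    {k : ℕ} (hk : k ∈ rmExponents n m (r - 1)) : ∃ s ∈ rmExponents n m r, k ∈ Pset s := by
  obtain ⟨hkn, hkr⟩ := mem_rmExponents.1 hk
  obtain ⟨s, hs, hks, hws⟩ := exists_mem_Pset_wtm_eq_succ (show k < 2 ^ m by omega) (by omega)
  have hsn : s ≠ n := fun h => by
    rw [h, hn, wtm_two_pow_sub_one] at hws
    omega
  exact ⟨s, mem_rmExponents.2 ⟨by omega, by omega⟩, hks⟩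

theorem crSet_rmExponents_biUnion_ccSet_Pset (hn : n = 2 ^ m - 1) (hr : 1 ≤ r) (hrm : r < m) :
    (crSet n m (rmExponents n m r)).biUnion (fun s => ccSet n m (Pset s))
      = rmExponents n m (r - 1) := by
  have hexp := isExpSet_rmExponents (r := r) hn
  refine Subset.antisymm (biUnion_subset.2 fun s hs => ?_) fun j hj => ?_
  · have hsr := hexp.ccSet_subset (mem_filter.1 hs).1
    exact (ccSet_mono (Pset_subset_rmExponents_pred hn hsr)).trans
      (isExpSet_rmExponents hn).ccSet_subset
  · obtain ⟨s, hs, hjs⟩ := exists_mem_Pset_of_mem_rmExponents_pred hn hr hrm hj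
    have hsn := (mem_rmExponents.1 hs).1
    have hjn := (mem_rmExponents.1 hj).1
    obtain ⟨i, hi, hcr⟩ := exists_two_pow_mul_mod_mem_crSet hn hs hsn
    exact mem_biUnion.2 ⟨_, hcr, mem_biUnion.2 ⟨2 ^ i * j % n,
      (two_pow_mul_mod_mem_Pset_iff hn hjn hsn i).2 hjs, mem_cycCoset_two_pow_mul_mod hn hjn hi⟩⟩

end ReedMuller

section Codes

variable {F : Type*} [Field F] {m n : ℕ} {S T : Finset ℕ}

lemma extCyclicCode_mono (hTS : T ⊆ S) (hT : ∀ j ∈ S, 2 * j % n ∈ T ↔ j ∈ T) :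
    (extCyclicCode n T : Set (F → F)) ⊆ extCyclicCode n S := by
  classical
  rintro c ⟨A, hA, hc⟩
  refine ⟨fun j => if j ∈ T then A j else 0, fun j hj => ?_, fun x => ?_⟩
  · dsimp only
    by_cases hjT : j ∈ T
    · rw [if_pos hjT, if_pos ((hT j hj).2 hjT), hA j hjT]
    · rw [if_neg hjT, if_neg (mt (hT j hj).1 hjT), zero_pow two_ne_zero]
  · simp only [hc x, ite_mul, zero_mul]
    rw [sum_ite_mem, inter_eq_right.2 hTS]

variable [CharP F 2]

/-- Squaring the coefficients of a derivative matches doubling its exponents: doubling modulo `n`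
preserves `Pset`, and `β ^ n = 1` absorbs the reduction modulo `n` in `β ^ (j - k)`. -/
lemma sum_Pset_coeff_two_mul_mod (hn : n = 2 ^ m - 1) (hS : IsExpSet n S) {A : ℕ → F}
    (hA : ∀ j ∈ S, A (2 * j % n) = A j ^ 2) {β : F} (hβ : β ^ n = 1) {k : ℕ} (hk : k < n) :
    ∑ j ∈ S, (if 2 * k % n ∈ Pset j then β ^ (j - 2 * k % n) else 0) * A j
      = (∑ j ∈ S, (if k ∈ Pset j then β ^ (j - k) else 0) * A j) ^ 2 := by
  have hm := pos_of_lt_two_pow_sub_one hn hk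
  have hdbl : ∀ j, 2 * j % n = 2 ^ 1 * j % n := fun j => by rw [pow_one]
  rw [sum_pow_char]
  refine (sum_nbij' (fun j => 2 * j % n) (fun j => 2 ^ (m - 1) * j % n)
    (fun j hj => hS.2 j hj) (fun j hj => hS.two_pow_mul_mod_mem hj _) (fun j hj => ?_)
    (fun j hj => ?_) (fun j hj => ?_)).symm
  · rw [hdbl]
    exact two_pow_mul_two_pow_mul_mod_of_add_eq hn (hS.1 j hj) (Nat.sub_add_cancel hm)
  · rw [hdbl]
    exact two_pow_mul_two_pow_mul_mod_of_add_eq hn (hS.1 j hj) (by omega)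
  · have hiff := two_pow_mul_mod_mem_Pset_iff hn hk (hS.1 j hj) 1
    rw [← hdbl, ← hdbl] at hiff
    by_cases hkj : k ∈ Pset j
    · have hkj2 := hiff.2 hkj
      rw [if_pos hkj, if_pos hkj2, mul_pow, ← pow_mul, ← hA j hj]
      congr 1
      refine pow_eq_pow_of_modEq (Nat.ModEq.add_right_cancel' (2 * k % n) ?_) hβ
      have hlt := lt_of_mem_Pset hkj
      rw [Nat.sub_add_cancel (lt_of_mem_Pset hkj2).le]
      calc (j - k) * 2 + 2 * k % n ≡ (j - k) * 2 + 2 * k [MOD n] :=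
            (Nat.mod_modEq _ _).add_left _
        _ = 2 * j := by omega
        _ ≡ 2 * j % n [MOD n] := (Nat.mod_modEq _ _).symm
    · rw [if_neg hkj, if_neg (mt hiff.1 hkj)]
      ring

theorem derivSet_extCyclicCode_subset (hn : n = 2 ^ m - 1) (hS : IsExpSet n S)
    (hT : ∀ k ∈ T, k < n) (hST : ∀ j ∈ S, Pset j ⊆ T) {β : F} (hβ : β ^ n = 1) :
    derivSet β (extCyclicCode n S) ⊆ extCyclicCode n T := by
  rintro d ⟨c, ⟨A, hA, hc⟩, rfl⟩
  refine ⟨fun k => ∑ j ∈ S, (if k ∈ Pset j then β ^ (j - k) else 0) * A j,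
    fun k hk => sum_Pset_coeff_two_mul_mod hn hS hA hβ (hT k hk), fun x => ?_⟩
  simp only [hc]
  exact sum_mul_add_pow_sub_sum_mul_pow S (fun j => j) A hST x β

end Codes

section FiniteField

open Polynomial

variable {F : Type*} [Field F] [Fintype F] {m n : ℕ}

lemma eq_zero_of_forall_sum_mul_pow_eq_zero {S : Finset ℕ} (hS : ∀ j ∈ S, j < Fintype.card F)
    {A : ℕ → F} (h : ∀ x : F, ∑ j ∈ S, A j * x ^ j = 0) {j : ℕ} (hj : j ∈ S) : A j = 0 := by
  classical
  set P : F[X] := ∑ j ∈ S, C (A j) * X ^ j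
  have hcard := Fintype.card_pos (α := F)
  have hdeg : P.natDegree < Fintype.card F :=
    (natDegree_sum_le_of_forall_le _ _ (n := Fintype.card F - 1) fun i hi =>
      (natDegree_C_mul_X_pow_le _ _).trans (by have := hS i hi; omega)).trans_lt (by omega)
  have hP : P = 0 :=
    eq_zero_of_natDegree_lt_card_of_eval_eq_zero P Function.injective_id
      (fun x => by simp [P, eval_finsetSum, h x]) hdeg
  simpa [P, finsetSum_coeff, coeff_C_mul_X_pow, hj] using congrArg (coeff · j) hP

lemma coeff_eq_zero_of_forall_sum_mul_pow_eq {S T : Finset ℕ} (hS : ∀ j ∈ S, j < Fintype.card F)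
    (hT : ∀ j ∈ T, j < Fintype.card F) {A B : ℕ → F}
    (h : ∀ x : F, ∑ j ∈ S, A j * x ^ j = ∑ j ∈ T, B j * x ^ j) {k : ℕ} (hkT : k ∈ T)
    (hkS : k ∉ S) : B k = 0 := by
  classical
  have := eq_zero_of_forall_sum_mul_pow_eq_zero (S := S ∪ T)
    (A := fun j => (if j ∈ T then B j else 0) - if j ∈ S then A j else 0)
    (fun j hj => (mem_union.1 hj).elim (hS j) (hT j)) (fun x => ?_) (mem_union_right _ hkT)
  · simpa [hkT, hkS] using this
  · simp only [sub_mul, ite_mul, zero_mul, sum_sub_distrib, sum_ite_mem, union_inter_cancel_right,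
      union_inter_cancel_left, h x, sub_self]

lemma eq_zero_of_forall_sum_mul_pow_two_pow_eq_zero (hm : 2 ^ m ≤ Fintype.card F) {e : ℕ → F}
    (h : ∀ a : F, ∑ i ∈ range m, e i * a ^ 2 ^ i = 0) {i : ℕ} (hi : i < m) : e i = 0 := by
  have hinj : Set.InjOn (2 ^ ·) (range m : Set ℕ) :=
    fun a _ b _ hab => Nat.pow_right_injective le_rfl hab
  have := eq_zero_of_forall_sum_mul_pow_eq_zero (S := (range m).image (2 ^ ·))
    (A := fun j => e (Nat.log 2 j)) (fun j hj => ?_) (fun a => ?_)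
    (mem_image_of_mem _ (mem_range.2 hi))
  · simpa [Nat.log_pow] using this
  · obtain ⟨i, hi, rfl⟩ := mem_image.1 hj
    exact (Nat.pow_lt_pow_right one_lt_two (mem_range.1 hi)).trans_le hm
  · rw [sum_image hinj]
    simpa [Nat.log_pow] using h a

lemma sum_range_comp_add_one_mod {M : Type*} [AddCommMonoid M] (f : ℕ → M) (m : ℕ) :
    ∑ i ∈ range m, f ((i + 1) % m) = ∑ i ∈ range m, f i := by
  rcases m with _ | m
  · simp
  rw [sum_range_succ, sum_range_succ', Nat.mod_self]
  congr 1
  exact sum_congr rfl fun i hi => by rw [Nat.mod_eq_of_lt (by simpa using hi)]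

lemma pow_two_pow_mod (hF : Fintype.card F = 2 ^ m) (a : F) (b : ℕ) :
    a ^ 2 ^ (b % m) = a ^ 2 ^ b := by
  conv_rhs => rw [← Nat.mod_add_div b m, pow_add, pow_mul, pow_mul, ← hF,
    FiniteField.pow_card_pow]

/-- The codeword `x ↦ Tr(a x ^ s)`, with the powers `x ^ (2 ^ i * s)` reduced along the cyclotomic
coset of `s`. -/
theorem traceCodeword_mem (hF : Fintype.card F = 2 ^ m) (hn : n = 2 ^ m - 1) {S : Finset ℕ}
    (hS : IsExpSet n S) {s : ℕ} (hs : s ∈ S) (a : F) :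
    (fun x : F => ∑ i ∈ range m, a ^ 2 ^ i * x ^ (2 ^ i * s % n)) ∈ extCyclicCode n S := by
  classical
  have : CharP F 2 := charP_of_card_eq_prime_pow hF
  refine ⟨fun u => ∑ i ∈ range m, if 2 ^ i * s % n = u then a ^ 2 ^ i else 0,
    fun u hu => ?_, fun x => ?_⟩
  · have hun := hS.1 u hu
    dsimp only
    rw [sum_pow_char]
    conv_lhs => rw [← sum_range_comp_add_one_mod]
    refine sum_congr rfl fun i _ => ?_
    have hrot : 2 ^ ((i + 1) % m) * s % n = 2 * (2 ^ i * s % n) % n := by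
      rw [add_comm i 1, ← two_pow_mul_two_pow_mul_mod hn, pow_one]
    have hiff : 2 * (2 ^ i * s % n) % n = 2 * u % n ↔ 2 ^ i * s % n = u :=
      ⟨eq_of_two_mul_mod_eq hn (Nat.mod_lt _ (by omega)) hun, fun h => h ▸ rfl⟩
    rw [hrot, pow_two_pow_mod hF, ite_pow, zero_pow two_ne_zero, ← pow_mul, ← pow_succ]
    exact if_congr hiff rfl rfl
  · simp only [sum_mul, ite_mul, zero_mul]
    rw [sum_comm]
    refine sum_congr rfl fun i _ => ?_
    rw [sum_ite_eq, if_pos (hS.two_pow_mul_mod_mem hs i)]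

theorem Pset_subset_of_derivSet_subset (hF : Fintype.card F = 2 ^ m) (hn : n = 2 ^ m - 1)
    {S S' : Finset ℕ} (hS : IsExpSet n S) (hS' : ∀ j ∈ S', j < n) {β : F} (hβ : β ≠ 0)
    (hsub : derivSet β (extCyclicCode n S) ⊆ extCyclicCode n S') {s : ℕ} (hs : s ∈ S) :
    Pset s ⊆ S' := by
  have : CharP F 2 := charP_of_card_eq_prime_pow hF
  intro k hk
  by_contra hkS'
  have hsn := hS.1 s hs
  have hkn := (lt_of_mem_Pset hk).trans hsn
  have hPn : ∀ i ∈ range m, Pset (2 ^ i * s % n) ⊆ range n := fun i _ k' hk' =>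
    mem_range.2 ((lt_of_mem_Pset hk').trans (Nat.mod_lt _ (by omega)))
  have hcoeff : ∀ a : F, ∑ i ∈ range m,
      (if k ∈ Pset (2 ^ i * s % n) then β ^ (2 ^ i * s % n - k) else 0) * a ^ 2 ^ i = 0 := by
    intro a
    obtain ⟨A', -, hA'⟩ := hsub ⟨_, traceCodeword_mem hF hn hS hs a, rfl⟩
    exact coeff_eq_zero_of_forall_sum_mul_pow_eq (fun j hj => by have := hS' j hj; omega)
      (fun j hj => by have := mem_range.1 hj; omega)
      (fun x => (hA' x).symm.trans (sum_mul_add_pow_sub_sum_mul_pow (range m)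
        (fun i => 2 ^ i * s % n) (fun i => a ^ 2 ^ i) hPn x β))
      (mem_range.2 hkn) hkS'
  have := eq_zero_of_forall_sum_mul_pow_two_pow_eq_zero hF.ge hcoeff
    (pos_of_lt_two_pow_sub_one hn hsn)
  rw [pow_zero, one_mul, Nat.mod_eq_of_lt hsn, if_pos hk] at this
  exact pow_ne_zero _ hβ this

end FiniteField

theorem cyclicDD_of_RM_general (m : ℕ)
    (n : ℕ) (hn : n = 2 ^ m - 1)
    {F : Type*} [Field F] [Fintype F] (hF : Fintype.card F = 2 ^ m)
    (r : ℕ) (hr1 : 1 ≤ r) (hr2 : r + 1 ≤ m) :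
    (∀ β : F, β ≠ 0 →
      derivSet β (extCyclicCode n ((Finset.range n).filter fun j => wtm m j ≤ r))
          ⊆ (extCyclicCode n ((Finset.range n).filter fun j => wtm m j ≤ r - 1) :
              Set (F → F)) ∧
      ∀ S' : Finset ℕ, IsExpSet n S' →
        derivSet β (extCyclicCode n ((Finset.range n).filter fun j => wtm m j ≤ r))
            ⊆ (extCyclicCode n S' : Set (F → F)) →
        (extCyclicCode n ((Finset.range n).filter fun j => wtm m j ≤ r - 1) :
            Set (F → F)) ⊆ extCyclicCode n S') ∧
    (crSet n m ((Finset.range n).filter fun j => wtm m j ≤ r)).biUnion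
        (fun s => ccSet n m (Pset s))
      = (Finset.range n).filter fun j => wtm m j ≤ r - 1 := by
  have : CharP F 2 := charP_of_card_eq_prime_pow hF
  have hexp := isExpSet_rmExponents (r := r) hn
  refine ⟨fun β hβ => ⟨?_, fun S' hS' hsub => ?_⟩,
    crSet_rmExponents_biUnion_ccSet_Pset hn hr1 (by omega)⟩
  · refine derivSet_extCyclicCode_subset hn hexp (fun k hk => (mem_rmExponents.1 hk).1)
      (fun j hj => Pset_subset_rmExponents_pred hn hj) ?_
    rw [hn, ← hF]
    exact FiniteField.pow_card_sub_one_eq_one β hβ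
  · refine extCyclicCode_mono (fun k hk => ?_)
      fun j hj => two_mul_mod_mem_rmExponents_iff hn (hS'.1 j hj)
    obtain ⟨s, hs, hks⟩ := exists_mem_Pset_of_mem_rmExponents_pred hn hr1 (by omega) hk
    exact Pset_subset_of_derivSet_subset hF hn hexp hS'.1 hβ hsub hs hks

/-- For `1 ≤ r ≤ m-1`, the cyclic derivative descendant of the extended cyclic
code with exponent set `{j ∈ {0,…,2^m-2} : wt(j̄) ≤ r}` (the Reed–Muller code
`RM(r,m)`) is the extended cyclic code with exponent set
`{j ∈ {0,…,2^m-2} : wt(j̄) ≤ r-1}` (the Reed–Muller code `RM(r-1,m)`): for every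
direction `β ≠ 0`, `RM(r-1,m)` contains all derivatives of codewords of `RM(r,m)`
and is contained in every extended cyclic code containing them.  Equivalently,
`∪_{s ∈ cr(S)} cc(P(s)) = {j : wt(j̄) ≤ r-1}` where `S = {j : wt(j̄) ≤ r}`. -/
theorem cyclicDD_of_RM (m : ℕ) (hm : 0 < m)
    (n : ℕ) (hn : n = 2 ^ m - 1)
    {F : Type*} [Field F] [Fintype F] (hF : Fintype.card F = 2 ^ m)
    (r : ℕ) (hr1 : 1 ≤ r) (hr2 : r + 1 ≤ m) :
    (∀ β : F, β ≠ 0 →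
      derivSet β (extCyclicCode n ((Finset.range n).filter fun j => wtm m j ≤ r))
          ⊆ (extCyclicCode n ((Finset.range n).filter fun j => wtm m j ≤ r - 1) :
              Set (F → F)) ∧
      ∀ S' : Finset ℕ, IsExpSet n S' →
        derivSet β (extCyclicCode n ((Finset.range n).filter fun j => wtm m j ≤ r))
            ⊆ (extCyclicCode n S' : Set (F → F)) →
        (extCyclicCode n ((Finset.range n).filter fun j => wtm m j ≤ r - 1) :
            Set (F → F)) ⊆ extCyclicCode n S') ∧
    (crSet n m ((Finset.range n).filter fun j => wtm m j ≤ r)).biUnion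
        (fun s => ccSet n m (Pset s))
      = (Finset.range n).filter fun j => wtm m j ≤ r - 1 :=
  cyclicDD_of_RM_general m n hn hF r hr1 hr2
end

section
/- For 0 ≤ r ≤ m−2, the cyclic derivative ascendant of the extended cyclic code with exponent set {j ∈ {0,…,2^m−2} : wt(j̄) ≤ r} (the Reed–Muller code RM(r,m)) is the extended cyclic code with exponent set {j ∈ {0,…,2^m−2} : wt(j̄) ≤ r+1} (the Reed–Muller code RM(r+1,m)). Equivalently, for s ∈ {0,…,2^m−2}: cc(P(s)) ⊆ {j : wt(j̄) ≤ r} if and only if wt(s̄) ≤ r+1. -/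
/-! Over a field `F` of characteristic 2 with `|F| = n + 1`, a polynomial function
`∑_{k<n} B_k x^k` determines its coefficients, and it is `GF(2)`-valued iff
`B_{2k mod n} = B_k²`.  So codewords of extended cyclic codes are `GF(2)`-valued, and a
`GF(2)`-valued function lies in the code whose exponent set contains the support of its
coefficients.  By Lucas' theorem the coefficient of `x^k` in `(x + β)^j - x^j` is nonzero
only if the bits of `k` form a proper subset of those of `j`, which lowers the binary weight;
this gives `D(RM(r+1,m)) ⊆ RM(r,m)`.  Conversely, if `s ∈ S'` has weight at least `r + 2`,
deleting one bit of `s` gives `k` of weight above `r`, and the coefficient of `x^k` in the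
derivative of `∑_{j ∈ S'} x^j` is a polynomial in `β` whose `β^(s-k)`-coefficient is
`C(s,k) = 1`, so it cannot vanish for all `β`.  Doubling modulo `2^m - 1` rotates the `m`
bits, so cyclotomic cosets have constant weight, which settles the description through
`cc(P(s))`. -/

open Finset

namespace Nat

theorem or_eq_right_iff_mod_two {k n : ℕ} :
    k ||| n = n ↔ k % 2 ≤ n % 2 ∧ k / 2 ||| n / 2 = n / 2 := by
  constructor
  · intro h
    refine ⟨?_, by rw [← or_div_two, h]⟩
    have h0 : (k ||| n).testBit 0 = n.testBit 0 := by rw [h]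
    rcases mod_two_eq_zero_or_one k with hk | hk <;>
      rcases mod_two_eq_zero_or_one n with hn | hn <;>
      simp [testBit_zero, hk, hn] at h0 ⊢
  · rintro ⟨h0, h⟩
    apply eq_of_testBit_eq
    rintro (_ | i)
    · rcases mod_two_eq_zero_or_one k with hk | hk <;>
        rcases mod_two_eq_zero_or_one n with hn | hn <;>
        simp [testBit_zero, hk, hn] at h0 ⊢
    · rw [testBit_add_one, testBit_add_one, or_div_two, h]

theorem odd_choose_iff_or_eq (n k : ℕ) : Odd (n.choose k) ↔ k ||| n = n := by
  induction n using Nat.strong_induction_on generalizing k with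
  | _ n ih =>
  rcases n.eq_zero_or_pos with rfl | hn
  · cases k <;> simp
  have lucas : n.choose k % 2 = ((n % 2).choose (k % 2) * (n / 2).choose (k / 2)) % 2 :=
    Choose.choose_modEq_choose_mod_mul_choose_div_nat
  rw [odd_iff, lucas, ← odd_iff, odd_mul, ih _ (div_lt_self hn one_lt_two),
    or_eq_right_iff_mod_two (k := k)]
  rcases mod_two_eq_zero_or_one n with hn2 | hn2 <;>
    rcases mod_two_eq_zero_or_one k with hk2 | hk2 <;> simp [hn2, hk2]

theorem testBit_of_or_eq {k j i : ℕ} (h : k ||| j = j) (hi : k.testBit i) : j.testBit i := by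
  simpa [testBit_or, hi] using (congrArg (testBit · i) h).symm

theorem lt_of_or_eq {k j : ℕ} (h : k ||| j = j) (hne : k ≠ j) : k < j :=
  lt_of_le_of_ne (h ▸ left_le_or) hne

end Nat

theorem wtm_succ (m s : ℕ) : wtm (m + 1) s = wtm m (s / 2) + s % 2 := by
  simp only [wtm, card_filter, sum_range_succ', Nat.testBit_add_one, Nat.testBit_zero]
  rcases Nat.mod_two_eq_zero_or_one s with h | h <;> simp [h]

theorem wtm_succ_of_lt {m s : ℕ} (hs : s < 2 ^ (m + 1)) :
    wtm (m + 1) s = wtm m (s % 2 ^ m) + s / 2 ^ m := by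
  have htop : s / 2 ^ m < 2 := by
    rw [Nat.div_lt_iff_lt_mul (by positivity)]; rwa [← pow_succ']
  rw [wtm, wtm, card_filter, card_filter, sum_range_succ]
  congr 1
  · refine sum_congr rfl fun i hi => ?_
    rw [Nat.testBit_mod_two_pow, decide_eq_true (mem_range.mp hi), Bool.true_and]
  · rw [Nat.testBit_eq_decide_div_mod_eq]
    interval_cases s / 2 ^ m <;> simp

theorem two_mul_mod_two_pow_sub_one {m k : ℕ} (hk : k < 2 ^ (m + 1) - 1) :
    2 * k % (2 ^ (m + 1) - 1) = 2 * (k % 2 ^ m) + k / 2 ^ m := by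
  have hdiv := Nat.div_add_mod k (2 ^ m)
  have hpow : 2 ^ (m + 1) = 2 * 2 ^ m := pow_succ' 2 m
  have htop : k / 2 ^ m < 2 := by
    rw [Nat.div_lt_iff_lt_mul (by positivity)]; omega
  have hmod := Nat.mod_lt k (pow_pos two_pos m)
  generalize 2 ^ m = c at *
  interval_cases h : k / c
  · rw [Nat.mod_eq_of_lt (by omega)]; omega
  · rw [show 2 * k = 2 * (k % c) + 1 + (2 ^ (m + 1) - 1) by omega, Nat.add_mod_right,
      Nat.mod_eq_of_lt (by omega)]

theorem wtm_two_mul_mod {m k : ℕ} (hk : k < 2 ^ m - 1) :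
    wtm m (2 * k % (2 ^ m - 1)) = wtm m k := by
  cases m with
  | zero => simp at hk
  | succ m =>
    have htop : k / 2 ^ m < 2 := by
      rw [Nat.div_lt_iff_lt_mul (by positivity), ← pow_succ']; omega
    rw [two_mul_mod_two_pow_sub_one hk, wtm_succ, wtm_succ_of_lt (by omega)]
    generalize k % 2 ^ m = l
    generalize k / 2 ^ m = b at htop
    rw [show (2 * l + b) / 2 = l by omega, show (2 * l + b) % 2 = b by omega]

theorem wtm_two_pow_mul_mod_s15 {m k : ℕ} (hk : k < 2 ^ m - 1) (u : ℕ) :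
    wtm m (2 ^ u * k % (2 ^ m - 1)) = wtm m k := by
  induction u with
  | zero => rw [pow_zero, one_mul, Nat.mod_eq_of_lt hk]
  | succ u ih =>
    rw [pow_succ', mul_assoc, ← Nat.mul_mod_mod, wtm_two_mul_mod (Nat.mod_lt _ (by omega)), ih]

theorem wtm_lt_of_or_eq {m k j : ℕ} (h : k ||| j = j) (hne : k ≠ j) (hj : j < 2 ^ m) :
    wtm m k < wtm m j := by
  obtain ⟨i, hi⟩ : ∃ i, k.testBit i ≠ j.testBit i := by
    by_contra! heq
    exact hne (Nat.eq_of_testBit_eq heq)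
  have hki : k.testBit i = false := by
    by_contra hk
    rw [Bool.not_eq_false] at hk
    exact hi (by rw [hk, Nat.testBit_of_or_eq h hk])
  have hji : j.testBit i = true := by simpa [hki] using hi.symm
  have him : i < m :=
    (Nat.pow_lt_pow_iff_right (by norm_num)).mp ((Nat.ge_two_pow_of_testBit hji).trans_lt hj)
  refine card_lt_card ((ssubset_iff_of_subset fun a => ?_).mpr
    ⟨i, by simp [him, hji], by simp [hki]⟩)
  simp only [mem_filter, mem_range]
  exact fun ⟨ha, hka⟩ => ⟨ha, Nat.testBit_of_or_eq h hka⟩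

theorem exists_or_eq_wtm_succ {m s : ℕ} (hs : 0 < wtm m s) :
    ∃ k, k ||| s = s ∧ k ≠ s ∧ wtm m k + 1 = wtm m s := by
  obtain ⟨i, hi⟩ := card_pos.mp hs
  rw [mem_filter, mem_range] at hi
  have hbit (j : ℕ) : (s ^^^ 2 ^ i).testBit j = (s.testBit j && !decide (i = j)) := by
    rw [Nat.testBit_xor, Nat.testBit_two_pow]
    by_cases hij : i = j
    · subst hij; simp [hi.2]
    · simp [hij]
  refine ⟨s ^^^ 2 ^ i, ?_, fun h => ?_, ?_⟩
  · exact Nat.eq_of_testBit_eq fun j => by rw [Nat.testBit_or, hbit]; cases s.testBit j <;> simp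
  · simpa [hbit, hi.2] using congrArg (Nat.testBit · i) h
  · have : (range m).filter (fun j => (s ^^^ 2 ^ i).testBit j)
        = ((range m).filter fun j => s.testBit j).erase i := by
      ext j
      simp only [mem_filter, mem_erase, mem_range, hbit]
      by_cases hij : i = j
      · subst hij; simp
      · simp [hij, Ne.symm hij]
    rw [wtm, wtm, this, card_erase_add_one (by simpa using hi)]

theorem two_mul_mod_injOn {n : ℕ} (hn : Odd n) :
    Set.InjOn (fun j => 2 * j % n) (Set.Iio n) := by
  intro j hj k hk hjk
  have := Nat.ModEq.cancel_left_of_coprime (Nat.coprime_comm.mp (Nat.coprime_two_left.mpr hn)) hjk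
  rwa [Nat.ModEq, Nat.mod_eq_of_lt hj, Nat.mod_eq_of_lt hk] at this

namespace IsExpSet

variable {n : ℕ} {S : Finset ℕ}

theorem image_two_mul_mod (hS : IsExpSet n S) (hn : Odd n) :
    S.image (fun j => 2 * j % n) = S :=
  eq_of_subset_of_card_le (image_subset_iff.mpr hS.2)
    (card_image_of_injOn ((two_mul_mod_injOn hn).mono fun j hj => hS.1 j hj)).ge

theorem sum_two_mul_mod {M : Type*} [AddCommMonoid M] (hS : IsExpSet n S) (hn : Odd n)
    (g : ℕ → M) : ∑ j ∈ S, g (2 * j % n) = ∑ j ∈ S, g j := by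
  conv_rhs => rw [← hS.image_two_mul_mod hn]
  exact (sum_image ((two_mul_mod_injOn hn).mono fun j hj => hS.1 j hj)).symm

end IsExpSet

theorem isExpSet_range (n : ℕ) : IsExpSet n (range n) :=
  ⟨fun _ => mem_range.mp, fun j hj => mem_range.mpr (Nat.mod_lt _ (by simp at hj; omega))⟩

section PolynomialFunction

variable {F : Type*} [Field F]

theorem eq_zero_of_forall_sum_mul_pow_eq_zero_s15 [Fintype F] {ι : Type*} {S : Finset ι}
    {e : ι → ℕ} (he : Set.InjOn e S) (hlt : ∀ i ∈ S, e i < Fintype.card F) {B : ι → F}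
    (h : ∀ x : F, ∑ i ∈ S, B i * x ^ e i = 0) {i : ι} (hi : i ∈ S) : B i = 0 := by
  classical
  let p : Polynomial F := ∑ i ∈ S, Polynomial.C (B i) * Polynomial.X ^ e i
  have hp : p = 0 := by
    refine Polynomial.eq_zero_of_natDegree_lt_card_of_eval_eq_zero' p univ
      (fun x _ => by simpa [p, Polynomial.eval_finsetSum] using h x) ?_
    refine lt_of_le_of_lt (Polynomial.natDegree_sum_le_of_forall_le _ _
      (n := Fintype.card F - 1) fun j hj => ?_) ?_
    · exact (Polynomial.natDegree_C_mul_X_pow_le _ _).trans (by have := hlt j hj; omega)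
    · rw [card_univ]; have := Fintype.card_pos (α := F); omega
  have hcoeff : p.coeff (e i) = B i := by
    simp only [p, Polynomial.finsetSum_coeff, Polynomial.coeff_C_mul_X_pow]
    rw [sum_eq_single_of_mem i hi fun j hj hji => if_neg fun h => hji (he hj hi h.symm), if_pos rfl]
  rw [← hcoeff, hp, Polynomial.coeff_zero]

def derivCoeff (S : Finset ℕ) (A : ℕ → F) (β : F) (k : ℕ) : F :=
  ∑ j ∈ S with k < j, A j * j.choose k * β ^ (j - k)

theorem sum_mul_add_pow_sub_sum_mul_pow_s15 {n : ℕ} {S : Finset ℕ} (hS : ∀ j ∈ S, j < n)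
    (A : ℕ → F) (β x : F) :
    ∑ j ∈ S, A j * (x + β) ^ j - ∑ j ∈ S, A j * x ^ j
      = ∑ k ∈ range n, derivCoeff S A β k * x ^ k := by
  have hterm : ∀ j ∈ S, A j * (x + β) ^ j - A j * x ^ j
      = ∑ k ∈ range n with k < j, A j * j.choose k * β ^ (j - k) * x ^ k := by
    intro j hj
    have hrange : (range n).filter (· < j) = range j := by
      ext k; simp only [mem_filter, mem_range]; have := hS j hj; omega
    rw [hrange, add_pow, sum_range_succ, Nat.sub_self, pow_zero, Nat.choose_self,
      Nat.cast_one, mul_one, mul_one, mul_add, add_sub_cancel_right, mul_sum]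
    exact sum_congr rfl fun k _ => by ring
  rw [← sum_sub_distrib, sum_congr rfl hterm, sum_comm' (t' := range n)
    (s' := fun k => S.filter (k < ·)) (fun j k => by simp only [mem_filter]; tauto)]
  simp only [derivCoeff, sum_mul]

end PolynomialFunction

theorem coeff_eq_zero_of_mem_extCyclicCode {F : Type*} [Field F] [Fintype F] {n : ℕ}
    (hn : n < Fintype.card F) {S : Finset ℕ} (hS : S ⊆ range n) {f : F → F} {B : ℕ → F}
    (hf : ∀ x, f x = ∑ k ∈ range n, B k * x ^ k) (hc : f ∈ extCyclicCode n S) {k : ℕ}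
    (hk : k < n) (hkS : k ∉ S) : B k = 0 := by
  classical
  obtain ⟨A, -, hA⟩ := hc
  have hdiff : ∀ x : F, ∑ i ∈ range n, (B i - if i ∈ S then A i else 0) * x ^ i = 0 := by
    intro x
    have hA' : ∑ i ∈ S, A i * x ^ i = ∑ i ∈ range n, (if i ∈ S then A i else 0) * x ^ i :=
      sum_subset_zero_on_sdiff hS (fun i hi => by simp [(mem_sdiff.mp hi).2])
        (fun i hi => by simp [hi])
    simp only [sub_mul, sum_sub_distrib, ← hf, ← hA', ← hA, sub_self]
  have := eq_zero_of_forall_sum_mul_pow_eq_zero_s15 (fun _ _ _ _ h => h)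
    (fun i hi => (mem_range.mp hi).trans hn) hdiff (mem_range.mpr hk)
  simpa [hkS] using this

section CharTwo

variable {F : Type*} [Field F] [Fintype F] [CharP F 2] {n : ℕ}

theorem odd_of_card_eq_succ (hn : Fintype.card F = n + 1) : Odd n := by
  have := FiniteField.even_card_of_char_two (ringChar.eq F 2)
  rw [Nat.odd_iff]; omega

theorem pow_two_mul_mod (hn : Fintype.card F = n + 1) (x : F) {j : ℕ} (hj : j < n) :
    x ^ (2 * j % n) = x ^ (2 * j) := by
  rcases eq_or_ne x 0 with rfl | hx
  · rcases j.eq_zero_or_pos with rfl | hj0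
    · simp
    have hne : 2 * j % n ≠ 0 := by
      intro h
      have := (Nat.Coprime.dvd_mul_left (Nat.coprime_two_left.mpr (odd_of_card_eq_succ hn)).symm).mp
        (Nat.dvd_of_mod_eq_zero h)
      exact absurd (Nat.le_of_dvd hj0 this) (by omega)
    rw [zero_pow hne, zero_pow (by omega)]
  · have hxn : x ^ n = 1 := by
      simpa [hn] using FiniteField.pow_card_sub_one_eq_one x hx
    conv_rhs => rw [← Nat.mod_add_div (2 * j) n, pow_add, pow_mul, hxn, one_pow, mul_one]

theorem sq_eq_self_of_mem_extCyclicCode (hn : Fintype.card F = n + 1) {S : Finset ℕ}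
    (hS : IsExpSet n S) {c : F → F} (hc : c ∈ extCyclicCode n S) (x : F) : c x ^ 2 = c x := by
  obtain ⟨A, hA, hcx⟩ := hc
  calc c x ^ 2 = ∑ j ∈ S, A (2 * j % n) * x ^ (2 * j % n) := by
        rw [hcx, CharTwo.sum_sq]
        refine sum_congr rfl fun j hj => ?_
        rw [mul_pow, ← pow_mul, mul_comm j 2, hA j hj, pow_two_mul_mod hn x (hS.1 j hj)]
    _ = c x := by rw [hS.sum_two_mul_mod (odd_of_card_eq_succ hn) fun j => A j * x ^ j, hcx]

theorem frobenius_coeff_of_sq_eq_self (hn : Fintype.card F = n + 1) {B : ℕ → F}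
    (h : ∀ x : F, (∑ k ∈ range n, B k * x ^ k) ^ 2 = ∑ k ∈ range n, B k * x ^ k)
    {k : ℕ} (hk : k < n) : B (2 * k % n) = B k ^ 2 := by
  have hodd := odd_of_card_eq_succ hn
  have hvanish : ∀ x : F, ∑ i ∈ range n, (B (2 * i % n) - B i ^ 2) * x ^ (2 * i % n) = 0 := by
    intro x
    have hsq :
        (∑ i ∈ range n, B i * x ^ i) ^ 2 = ∑ i ∈ range n, B i ^ 2 * x ^ (2 * i % n) := by
      rw [CharTwo.sum_sq]
      refine sum_congr rfl fun i hi => ?_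
      rw [mul_pow, ← pow_mul, mul_comm i 2, pow_two_mul_mod hn x (mem_range.mp hi)]
    rw [← sub_eq_zero.mpr (h x).symm, hsq, ← (isExpSet_range n).sum_two_mul_mod hodd
      (fun i => B i * x ^ i), ← sum_sub_distrib]
    exact sum_congr rfl fun i _ => by ring
  exact sub_eq_zero.mp (eq_zero_of_forall_sum_mul_pow_eq_zero_s15
    ((two_mul_mod_injOn hodd).mono fun i hi => mem_range.mp hi)
    (fun i _ => (Nat.mod_lt _ hodd.pos).trans (by omega)) hvanish (mem_range.mpr hk))

theorem mem_extCyclicCode_of_sq_eq_self (hn : Fintype.card F = n + 1) {S : Finset ℕ}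
    (hS : S ⊆ range n) {B : ℕ → F} (hB : ∀ k < n, k ∉ S → B k = 0) {f : F → F}
    (hf : ∀ x, f x = ∑ k ∈ range n, B k * x ^ k) (hsq : ∀ x, f x ^ 2 = f x) :
    f ∈ extCyclicCode n S :=
  ⟨B, fun j hj => frobenius_coeff_of_sq_eq_self hn (fun x => by rw [← hf, hsq])
      (mem_range.mp (hS hj)),
    fun x => (hf x).trans (sum_subset hS fun k hk hkS => by rw [hB k (mem_range.mp hk) hkS,
      zero_mul]).symm⟩

end CharTwo

def rmExpSet (m r : ℕ) : Finset ℕ := (range (2 ^ m - 1)).filter fun j => wtm m j ≤ r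

theorem isExpSet_rmExpSet (m r : ℕ) : IsExpSet (2 ^ m - 1) (rmExpSet m r) := by
  refine ⟨fun j hj => mem_range.mp (mem_filter.mp hj).1, fun j hj => ?_⟩
  obtain ⟨hjn, hjr⟩ := mem_filter.mp hj
  exact mem_filter.mpr ⟨mem_range.mpr (Nat.mod_lt _ (by simp at hjn; omega)),
    by rwa [wtm_two_mul_mod (mem_range.mp hjn)]⟩

theorem derivCoeff_eq_zero {F : Type*} [Field F] [CharP F 2] {m : ℕ} {S : Finset ℕ}
    {A : ℕ → F} {β : F} {k : ℕ} (hS : ∀ j ∈ S, j < 2 ^ m ∧ wtm m j ≤ wtm m k) :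
    derivCoeff S A β k = 0 := by
  refine sum_eq_zero fun j hj => ?_
  obtain ⟨hjS, hkj⟩ := mem_filter.mp hj
  have heven : Even (j.choose k) := by
    by_contra hodd
    rw [Nat.not_even_iff_odd, Nat.odd_choose_iff_or_eq] at hodd
    have := wtm_lt_of_or_eq hodd hkj.ne (hS j hjS).1
    have := (hS j hjS).2
    omega
  rw [CharTwo.natCast_eq_ite, if_pos heven, mul_zero, zero_mul]

section ReedMuller

variable {F : Type*} [Field F] [Fintype F] [CharP F 2] {m : ℕ}

theorem derivSet_rmExpSet_succ_subset (hF : Fintype.card F = 2 ^ m) (r : ℕ) (β : F) :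
    derivSet β (extCyclicCode (2 ^ m - 1) (rmExpSet m (r + 1)))
      ⊆ extCyclicCode (2 ^ m - 1) (rmExpSet m r) := by
  have hn : Fintype.card F = 2 ^ m - 1 + 1 := hF ▸ (Nat.sub_one_add_one (by positivity)).symm
  rintro _ ⟨c, hc, rfl⟩
  obtain ⟨A, -, hcx⟩ := id hc
  have hsq := sq_eq_self_of_mem_extCyclicCode hn (isExpSet_rmExpSet m (r + 1)) hc
  refine mem_extCyclicCode_of_sq_eq_self (B := derivCoeff (rmExpSet m (r + 1)) A β) hn
    (filter_subset _ _) (fun k hk hkS => derivCoeff_eq_zero (m := m) fun j hj => ?_) (fun x => ?_)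
    (fun x => by rw [sub_pow_char, hsq, hsq])
  · obtain ⟨hjn, hjr⟩ := mem_filter.mp hj
    simp only [mem_filter, mem_range, hk, true_and, not_le] at hkS
    exact ⟨(mem_range.mp hjn).trans_le (Nat.sub_le _ _), by omega⟩
  · rw [hcx, hcx]
    exact sum_mul_add_pow_sub_sum_mul_pow_s15 (fun j hj => mem_range.mp (mem_filter.mp hj).1) A β x

theorem subset_rmExpSet_succ_of_derivSet_subset (hF : Fintype.card F = 2 ^ m) {r : ℕ}
    {S : Finset ℕ} (hS : IsExpSet (2 ^ m - 1) S)
    (hder : ∀ β : F, β ≠ 0 → derivSet β (extCyclicCode (2 ^ m - 1) S)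
      ⊆ extCyclicCode (2 ^ m - 1) (rmExpSet m r)) :
    S ⊆ rmExpSet m (r + 1) := by
  have hn : Fintype.card F = 2 ^ m - 1 + 1 := hF ▸ (Nat.sub_one_add_one (by positivity)).symm
  intro s hs
  have hsn := hS.1 s hs
  refine mem_filter.mpr ⟨mem_range.mpr hsn, not_lt.mp fun hw => ?_⟩
  obtain ⟨k, hks, hne, hwk⟩ := exists_or_eq_wtm_succ (m := m) (s := s) (by omega)
  have hkslt : k < s := Nat.lt_of_or_eq hks hne
  have hcoeff (β : F) : derivCoeff S (fun _ => 1) β k = 0 := by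
    rcases eq_or_ne β 0 with rfl | hβ
    · exact sum_eq_zero fun j hj => by
        rw [zero_pow (by have := (mem_filter.mp hj).2; omega), mul_zero]
    · have hc : (fun x : F => ∑ j ∈ S, x ^ j) ∈ extCyclicCode (2 ^ m - 1) S :=
        ⟨fun _ => 1, fun _ _ => (one_pow 2).symm, fun x => by simp⟩
      exact coeff_eq_zero_of_mem_extCyclicCode (by omega) (filter_subset _ _)
        (fun x => by simpa using sum_mul_add_pow_sub_sum_mul_pow_s15 hS.1 (fun _ => (1 : F)) β x)
        (hder β hβ ⟨_, hc, rfl⟩) (by omega) (by simp; omega)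
  have hchoose : ((s.choose k : ℕ) : F) = 0 := by
    simpa using eq_zero_of_forall_sum_mul_pow_eq_zero_s15 (e := fun j => j - k)
      (fun i hi j hj h => by
        have := (mem_filter.mp hi).2; have := (mem_filter.mp hj).2; simp only at h; omega)
      (fun j hj => by have := hS.1 j (mem_filter.mp hj).1; omega) hcoeff
      (mem_filter.mpr ⟨hs, hkslt⟩)
  rw [CharTwo.natCast_eq_ite, if_neg (Nat.not_even_iff_odd.mpr
    ((Nat.odd_choose_iff_or_eq s k).mpr hks))] at hchoose
  exact one_ne_zero hchoose

end ReedMuller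

theorem ccSet_Pset_subset_rmExpSet_iff {m r s : ℕ} (hs : s < 2 ^ m - 1) :
    ccSet (2 ^ m - 1) m (Pset s) ⊆ rmExpSet m r ↔ wtm m s ≤ r + 1 := by
  constructor
  · intro hcc
    by_contra! hw
    obtain ⟨k, hks, hne, hwk⟩ := exists_or_eq_wtm_succ (m := m) (s := s) (by omega)
    have hkslt : k < s := Nat.lt_of_or_eq hks hne
    have hm : 0 < m := Nat.pos_of_ne_zero (by rintro rfl; simp at hs)
    have hkcc : k ∈ ccSet (2 ^ m - 1) m (Pset s) :=
      mem_biUnion.mpr ⟨k, mem_filter.mpr ⟨mem_range.mpr (by omega), hks, hne⟩,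
        mem_image.mpr ⟨0, mem_range.mpr hm,
          by rw [pow_zero, one_mul, Nat.mod_eq_of_lt (by omega)]⟩⟩
    have := (mem_filter.mp (hcc hkcc)).2
    omega
  · intro hw t ht
    obtain ⟨k, hkP, htk⟩ := mem_biUnion.mp ht
    obtain ⟨-, hks, hne⟩ := mem_filter.mp hkP
    obtain ⟨u, -, rfl⟩ := mem_image.mp htk
    have hkslt : k < s := Nat.lt_of_or_eq hks hne
    have := wtm_lt_of_or_eq hks hne (m := m) (by omega)
    exact mem_filter.mpr ⟨mem_range.mpr (Nat.mod_lt _ (by omega)),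
      by rw [wtm_two_pow_mul_mod_s15 (by omega)]; omega⟩

theorem cyclicDA_of_RM_general (m : ℕ)
    (n : ℕ) (hn : n = 2 ^ m - 1)
    {F : Type*} [Field F] [Fintype F] (hF : Fintype.card F = 2 ^ m)
    (r : ℕ) :
    (∀ β : F, β ≠ 0 →
      derivSet β (extCyclicCode n ((Finset.range n).filter fun j => wtm m j ≤ r + 1))
        ⊆ (extCyclicCode n ((Finset.range n).filter fun j => wtm m j ≤ r) :
            Set (F → F))) ∧
    (∀ S' : Finset ℕ, IsExpSet n S' →
      (∀ β : F, β ≠ 0 →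
        derivSet β (extCyclicCode n S')
          ⊆ (extCyclicCode n ((Finset.range n).filter fun j => wtm m j ≤ r) :
              Set (F → F))) →
      S'.card ≤ ((Finset.range n).filter fun j => wtm m j ≤ r + 1).card) ∧
    ∀ s : ℕ, s < n →
      (ccSet n m (Pset s) ⊆ (Finset.range n).filter (fun j => wtm m j ≤ r)
        ↔ wtm m s ≤ r + 1) := by
  subst hn
  have : CharP F 2 := charP_of_card_eq_prime_pow hF
  exact ⟨fun β _ => derivSet_rmExpSet_succ_subset hF r β,
    fun S' hS' hder => card_le_card (subset_rmExpSet_succ_of_derivSet_subset hF hS' hder),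
    fun s hs => ccSet_Pset_subset_rmExpSet_iff hs⟩

/-- For `0 ≤ r ≤ m-2`, the cyclic derivative ascendant of the extended cyclic code
with exponent set `{j ∈ {0,…,2^m-2} : wt(j̄) ≤ r}` (the Reed–Muller code
`RM(r,m)`) is the extended cyclic code with exponent set
`{j ∈ {0,…,2^m-2} : wt(j̄) ≤ r+1}` (the Reed–Muller code `RM(r+1,m)`): all the
derivatives of codewords of `RM(r+1,m)` in all nonzero directions lie in
`RM(r,m)`, and `RM(r+1,m)` has the largest dimension (= size of the exponent set)
among extended cyclic codes with this property.  Equivalently, for every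
`s ∈ {0,…,2^m-2}`: `cc(P(s)) ⊆ {j : wt(j̄) ≤ r}` iff `wt(s̄) ≤ r+1`. -/
theorem cyclicDA_of_RM (m : ℕ) (hm : 0 < m)
    (n : ℕ) (hn : n = 2 ^ m - 1)
    {F : Type*} [Field F] [Fintype F] (hF : Fintype.card F = 2 ^ m)
    (r : ℕ) (hr : r + 2 ≤ m) :
    (∀ β : F, β ≠ 0 →
      derivSet β (extCyclicCode n ((Finset.range n).filter fun j => wtm m j ≤ r + 1))
        ⊆ (extCyclicCode n ((Finset.range n).filter fun j => wtm m j ≤ r) :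
            Set (F → F))) ∧
    (∀ S' : Finset ℕ, IsExpSet n S' →
      (∀ β : F, β ≠ 0 →
        derivSet β (extCyclicCode n S')
          ⊆ (extCyclicCode n ((Finset.range n).filter fun j => wtm m j ≤ r) :
              Set (F → F))) →
      S'.card ≤ ((Finset.range n).filter fun j => wtm m j ≤ r + 1).card) ∧
    ∀ s : ℕ, s < n →
      (ccSet n m (Pset s) ⊆ (Finset.range n).filter (fun j => wtm m j ≤ r)
        ↔ wtm m s ≤ r + 1) :=
  cyclicDA_of_RM_general m n hn hF r
end
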